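/- arXiv:2410.17560 — 10 statements merged into one kernel-verified Lean document; each statement's English description precedes it below -/
import Mathlib

section
/- Let R be a principal ideal domain with fraction field F a number field, let L/F be a finite extension of degree n, let S be the integral closure of R in L, and let α ∈ S with F(α) = L. Then there exist d₁, …, d_{n−1} ∈ R and monic polynomials f₁, …, f_{n−1} ∈ R[X] with deg f_i = i such that {1, f₁(α)/d₁, f₂(α)/d₂, …, f_{n−1}(α)/d_{n−1}} is an R-module basis of S. -/
/-!
Filter `S` by degree in `α`: let `Sᵢ` consist of the integral elements of `F + Fα + ⋯ + Fαⁱ`.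
The coefficient of `αⁱ` maps `Sᵢ` onto a finitely generated `R`-submodule of `F` containing `1`;
as `R` is a PID it is `R · (1 / dᵢ)` for some `dᵢ ∈ R`. Choose `yᵢ ∈ Sᵢ` with leading coefficient
`1 / dᵢ` (and `y₀ = 1`). The family `(yᵢ)` is triangular with respect to `1, α, …, αⁿ⁻¹`, so it is
a basis of `S`. Since `α yᵢ ∈ Sᵢ₊₁`, `dᵢ₊₁ = u dᵢ` for some `u ∈ R`, and then `u yᵢ₊₁ - α yᵢ ∈ Sᵢ`;
by induction on `i` this gives `dᵢ Sᵢ ⊆ R + Rα + ⋯ + Rαⁱ`. Hence `dᵢ yᵢ = fᵢ(α)` with `fᵢ ∈ R[X]`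
of degree `≤ i` whose coefficient of `Xⁱ` is `dᵢ · (1 / dᵢ) = 1`.
-/

open Polynomial

namespace Polynomial

variable (R : Type*) {S : Type*} [CommRing R] [CommRing S] [Algebra R S] (x : S)

noncomputable def aevalDegreeLE (i : ℕ) : Submodule R S :=
  (degreeLE R i).map (aeval x).toLinearMap

variable {R x}

theorem aevalDegreeLE_mono {i j : ℕ} (hij : i ≤ j) : aevalDegreeLE R x i ≤ aevalDegreeLE R x j :=
  Submodule.map_mono (degreeLE_mono (by exact_mod_cast hij))

theorem algebraMap_mem_aevalDegreeLE_zero (r : R) : algebraMap R S r ∈ aevalDegreeLE R x 0 :=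
  ⟨C r, mem_degreeLE.2 degree_C_le, aeval_C _ _⟩

theorem mul_mem_aevalDegreeLE_succ {i : ℕ} {z : S} (hz : z ∈ aevalDegreeLE R x i) :
    x * z ∈ aevalDegreeLE R x (i + 1) := by
  obtain ⟨g, hg, rfl⟩ := hz
  refine ⟨g * X, mem_degreeLE.2 ?_, by simp [mul_comm]⟩
  rw [Nat.cast_succ]
  exact (degree_mul_le _ _).trans (add_le_add (mem_degreeLE.1 hg) degree_X_le)

end Polynomial

theorem Submodule.FG.isPrincipal_of_isFractionRing {R K : Type*} [CommRing R] [IsDomain R]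
    [IsPrincipalIdealRing R] [Field K] [Algebra R K] [IsFractionRing R K] {J : Submodule R K}
    (hJ : J.FG) : J.IsPrincipal :=
  FractionalIdeal.isPrincipal ⟨J, FractionalIdeal.isFractional_of_fg hJ⟩

namespace PowerBasis

section Coeff

variable {A S : Type*} [CommRing A] [Ring S] [Algebra A S] (pb : PowerBasis A S)

noncomputable def coeff (k : ℕ) : S →ₗ[A] A :=
  if h : k < pb.dim then pb.basis.coord ⟨k, h⟩ else 0

theorem coeff_of_lt {k : ℕ} (hk : k < pb.dim) (z : S) :
    pb.coeff k z = pb.basis.repr z ⟨k, hk⟩ := by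
  simp [coeff, hk]

theorem coeff_of_le {k : ℕ} (hk : pb.dim ≤ k) : pb.coeff k = 0 := by
  simp [coeff, not_lt.2 hk]

theorem coeff_gen_pow {j : ℕ} (hj : j < pb.dim) (k : ℕ) :
    pb.coeff k (pb.gen ^ j) = if j = k then 1 else 0 := by
  rcases lt_or_ge k pb.dim with hk | hk
  · rw [coeff_of_lt pb hk, ← show pb.basis ⟨j, hj⟩ = pb.gen ^ j from pb.basis_eq_pow _,
      pb.basis.repr_self, Finsupp.single_apply]
    simp
  · simp [coeff_of_le pb hk, (hj.trans_le hk).ne]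

theorem sum_coeff_smul_gen_pow (z : S) :
    ∑ k ∈ Finset.range pb.dim, pb.coeff k z • pb.gen ^ k = z := by
  conv_rhs => rw [← pb.basis.sum_repr z]
  rw [← Fin.sum_univ_eq_sum_range]
  exact Finset.sum_congr rfl fun k _ => by rw [coeff_of_lt pb k.2, pb.basis_eq_pow]

theorem eq_zero_of_forall_coeff_eq_zero {z : S} (hz : ∀ k, pb.coeff k z = 0) : z = 0 := by
  rw [← pb.sum_coeff_smul_gen_pow z]
  simp [hz]

theorem coeff_aeval {g : A[X]} (hg : g.natDegree < pb.dim) (k : ℕ) :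
    pb.coeff k (aeval pb.gen g) = g.coeff k := by
  rw [aeval_eq_sum_range' hg, map_sum, Finset.sum_congr rfl fun j hj => by
    rw [map_smul, coeff_gen_pow pb (Finset.mem_range.1 hj), smul_eq_mul, mul_ite, mul_one,
      mul_zero], Finset.sum_ite_eq']
  split_ifs with hk
  · rfl
  · exact (coeff_eq_zero_of_natDegree_lt (hg.trans_le (by simpa using hk))).symm

theorem coeff_succ_gen_mul {z : S} (hz : pb.coeff (pb.dim - 1) z = 0) (k : ℕ) :
    pb.coeff (k + 1) (pb.gen * z) = pb.coeff k z := by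
  have hterm : ∀ j < pb.dim,
      pb.coeff (k + 1) (pb.gen * (pb.coeff j z • pb.gen ^ j)) =
        if j = k then pb.coeff j z else 0 := by
    intro j hj
    rw [mul_smul_comm, ← pow_succ', map_smul]
    by_cases hj' : j + 1 < pb.dim
    · simp [coeff_gen_pow pb hj']
    · obtain rfl : j = pb.dim - 1 := by omega
      simp [hz]
  conv_lhs => rw [← pb.sum_coeff_smul_gen_pow z]
  rw [Finset.mul_sum, map_sum, Finset.sum_congr rfl fun j hj => hterm j (Finset.mem_range.1 hj),
    Finset.sum_ite_eq']
  split_ifs with hk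
  · rfl
  · rw [coeff_of_le pb (by simpa using hk), LinearMap.zero_apply]

end Coeff

section Integral

variable {R F L : Type*} [CommRing R] [Field F] [Field L] [Algebra R F] [Algebra F L] [Algebra R L]
  [IsScalarTower R F L] {pb : PowerBasis F L}

variable (R pb) in
/-- The module `Sᵢ` of the sketch above is `integralDegreeLT R pb (i + 1)`. -/
def integralDegreeLT (i : ℕ) : Submodule R L where
  carrier := {z | IsIntegral R z ∧ ∀ k, i ≤ k → pb.coeff k z = 0}
  add_mem' hz hy := ⟨hz.1.add hy.1, fun k hk => by simp [hz.2 k hk, hy.2 k hk]⟩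
  zero_mem' := ⟨isIntegral_zero, fun k _ => map_zero _⟩
  smul_mem' r _ hz :=
    ⟨hz.1.smul r, fun k hk => by rw [LinearMap.map_smul_of_tower, hz.2 k hk, smul_zero]⟩

theorem integralDegreeLT_zero : pb.integralDegreeLT R 0 = ⊥ :=
  eq_bot_iff.2 fun _ hz => pb.eq_zero_of_forall_coeff_eq_zero fun k => hz.2 k k.zero_le

theorem mem_integralDegreeLT_dim {z : L} (hz : IsIntegral R z) : z ∈ pb.integralDegreeLT R pb.dim :=
  ⟨hz, fun _ hk => by rw [pb.coeff_of_le hk, LinearMap.zero_apply]⟩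

theorem gen_pow_mem_integralDegreeLT (hgen : IsIntegral R pb.gen) {i : ℕ} (hi : i < pb.dim) :
    pb.gen ^ i ∈ pb.integralDegreeLT R (i + 1) :=
  ⟨hgen.pow i, fun k hk => by rw [pb.coeff_gen_pow hi, if_neg (by omega)]⟩

theorem gen_mul_mem_integralDegreeLT (hgen : IsIntegral R pb.gen) {m : ℕ} (hm : m < pb.dim)
    {z : L} (hz : z ∈ pb.integralDegreeLT R m) : pb.gen * z ∈ pb.integralDegreeLT R (m + 1) := by
  refine ⟨hgen.mul hz.1, fun k hk => ?_⟩
  obtain ⟨k, rfl⟩ : ∃ j, k = j + 1 := ⟨k - 1, by omega⟩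
  rw [pb.coeff_succ_gen_mul (hz.2 _ (by omega)), hz.2 k (by omega)]

theorem sub_smul_mem_integralDegreeLT {m : ℕ} {z y : L} (hz : z ∈ pb.integralDegreeLT R (m + 1))
    (hy : y ∈ pb.integralDegreeLT R (m + 1)) {r : R} (hr : pb.coeff m z = r • pb.coeff m y) :
    z - r • y ∈ pb.integralDegreeLT R m := by
  refine ⟨hz.1.sub (hy.1.smul r), fun k hk => ?_⟩
  rw [map_sub, LinearMap.map_smul_of_tower]
  rcases hk.eq_or_lt with rfl | hk
  · rw [hr, sub_self]
  · rw [hz.2 k hk, hy.2 k hk, smul_zero, sub_zero]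

theorem exists_algebraMap_eq_of_mem_integralDegreeLT_one [IsIntegrallyClosed R]
    [IsFractionRing R F] {z : L} (hz : z ∈ pb.integralDegreeLT R 1) :
    ∃ r : R, algebraMap R L r = z := by
  have hz_eq : algebraMap F L (pb.coeff 0 z) = z := by
    conv_rhs => rw [← pb.sum_coeff_smul_gen_pow z]
    rw [Finset.sum_eq_single 0 (fun k _ hk => by rw [hz.2 k (by omega), zero_smul])
      (fun h => absurd (Finset.mem_range.2 pb.dim_pos) h), pow_zero, Algebra.algebraMap_eq_smul_one]
  have hint : IsIntegral R (pb.coeff 0 z) :=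
    IsIntegral.tower_bot (algebraMap F L).injective (by rw [hz_eq]; exact hz.1)
  obtain ⟨r, hr⟩ := IsIntegrallyClosed.isIntegral_iff.1 hint
  exact ⟨r, by rw [IsScalarTower.algebraMap_apply R F L, hr, hz_eq]⟩

variable (R pb) in
/-- `y` and `d` play the roles of `yᵢ` and `dᵢ` in the sketch above. -/
structure IsLeadingGenerator (i : ℕ) (d : R) (y : L) : Prop where
  mem : y ∈ pb.integralDegreeLT R (i + 1)
  algebraMap_mul_coeff : algebraMap R F d * pb.coeff i y = 1
  exists_coeff_eq : ∀ z ∈ pb.integralDegreeLT R (i + 1), ∃ r : R, pb.coeff i z = r • pb.coeff i y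

theorem isLeadingGenerator_zero [IsIntegrallyClosed R] [IsFractionRing R F] :
    pb.IsLeadingGenerator R 0 1 1 := by
  have hcoeff (k : ℕ) : pb.coeff k 1 = if k = 0 then 1 else 0 := by
    rw [← pow_zero pb.gen, pb.coeff_gen_pow pb.dim_pos]
    simp only [eq_comm]
  refine ⟨⟨isIntegral_one, fun k hk => by rw [hcoeff, if_neg (by omega)]⟩, by simp [hcoeff],
    fun z hz => ?_⟩
  obtain ⟨r, rfl⟩ := exists_algebraMap_eq_of_mem_integralDegreeLT_one hz
  rw [Algebra.algebraMap_eq_smul_one, LinearMap.map_smul_of_tower]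
  exact ⟨r, rfl⟩

theorem exists_isLeadingGenerator [IsDomain R] [IsPrincipalIdealRing R] [IsFractionRing R F]
    [Algebra.IsSeparable F L] (hgen : IsIntegral R pb.gen) {i : ℕ} (hi : i < pb.dim) :
    ∃ d y, pb.IsLeadingGenerator R i d y := by
  have := pb.finite
  have : IsNoetherian R (integralClosure R L) := IsIntegralClosure.isNoetherian R F L _
  have hT : (pb.integralDegreeLT R (i + 1)).FG :=
    isNoetherian_submodule (N := (integralClosure R L).toSubmodule) |>.1 this _ fun _ hz => hz.1
  obtain ⟨c, hc⟩ :=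
    ((hT.map ((pb.coeff i).restrictScalars R)).isPrincipal_of_isFractionRing).principal
  obtain ⟨d, hd⟩ : ∃ d : R, d • c = 1 := by
    refine Submodule.mem_span_singleton.1
      (hc ▸ ⟨pb.gen ^ i, gen_pow_mem_integralDegreeLT hgen hi, ?_⟩)
    simp [pb.coeff_gen_pow hi]
  obtain ⟨y, hy, rfl⟩ := Submodule.mem_map.1 (hc ▸ Submodule.mem_span_singleton_self c)
  refine ⟨d, y, hy, by simpa [Algebra.smul_def] using hd, fun z hz => ?_⟩
  obtain ⟨r, hr⟩ := Submodule.mem_span_singleton.1 (hc ▸ Submodule.mem_map_of_mem hz)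
  exact ⟨r, hr.symm⟩

theorem IsLeadingGenerator.exists_eq_mul_of_succ [FaithfulSMul R F] (hgen : IsIntegral R pb.gen)
    {i : ℕ} (hi : i + 1 < pb.dim) {d d' : R} {y y' : L} (h : pb.IsLeadingGenerator R i d y)
    (h' : pb.IsLeadingGenerator R (i + 1) d' y') :
    ∃ u : R, d' = d * u ∧ pb.coeff (i + 1) (pb.gen * y) = u • pb.coeff (i + 1) y' := by
  obtain ⟨u, hu⟩ := h'.exists_coeff_eq _ (gen_mul_mem_integralDegreeLT hgen (by omega) h.mem)
  refine ⟨u, FaithfulSMul.algebraMap_injective R F ?_, hu⟩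
  rw [pb.coeff_succ_gen_mul (h.mem.2 _ (by omega)), Algebra.smul_def] at hu
  calc algebraMap R F d' = algebraMap R F d' * (algebraMap R F d * pb.coeff i y) := by
        rw [h.algebraMap_mul_coeff, mul_one]
    _ = algebraMap R F d * algebraMap R F u * (algebraMap R F d' * pb.coeff (i + 1) y') := by
        rw [hu]; ring
    _ = algebraMap R F (d * u) := by rw [h'.algebraMap_mul_coeff, mul_one, map_mul]

theorem smul_mem_aevalDegreeLE [IsIntegrallyClosed R] [IsFractionRing R F]
    (hgen : IsIntegral R pb.gen) {d : ℕ → R} {y : ℕ → L}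
    (hy : ∀ i < pb.dim, pb.IsLeadingGenerator R i (d i) (y i)) {i : ℕ} (hi : i < pb.dim) {z : L}
    (hz : z ∈ pb.integralDegreeLT R (i + 1)) : d i • z ∈ aevalDegreeLE R pb.gen i := by
  induction i generalizing z with
  | zero =>
    obtain ⟨r, rfl⟩ := exists_algebraMap_eq_of_mem_integralDegreeLT_one hz
    rw [Algebra.smul_def, ← map_mul]
    exact algebraMap_mem_aevalDegreeLE_zero _
  | succ i ih =>
    have hi' : i < pb.dim := by omega
    obtain ⟨u, hdu, hu⟩ := (hy i hi').exists_eq_mul_of_succ hgen hi (hy (i + 1) hi)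
    obtain ⟨r, hr⟩ := (hy (i + 1) hi).exists_coeff_eq z hz
    have hz' := sub_smul_mem_integralDegreeLT hz (hy (i + 1) hi).mem hr
    have hw := sub_smul_mem_integralDegreeLT
      (gen_mul_mem_integralDegreeLT hgen hi (hy i hi').mem) (hy (i + 1) hi).mem hu
    have hsplit : d (i + 1) • z = u • d i • (z - r • y (i + 1)) +
        r • (pb.gen * (d i • y i) - d i • (pb.gen * y i - u • y (i + 1))) := by
      rw [hdu, mul_smul_comm]
      module
    rw [hsplit]
    exact add_mem (Submodule.smul_mem _ _ (aevalDegreeLE_mono i.le_succ (ih hi' hz')))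
      (Submodule.smul_mem _ _ (sub_mem (mul_mem_aevalDegreeLE_succ (ih hi' (hy i hi').mem))
        (aevalDegreeLE_mono i.le_succ (ih hi' hw))))

theorem IsLeadingGenerator.monic_of_aeval_eq_smul [FaithfulSMul R F] {i : ℕ} {d : R} {y : L}
    (h : pb.IsLeadingGenerator R i d y) (hi : i < pb.dim) {g : R[X]} (hg : g ∈ degreeLE R i)
    (hgy : aeval pb.gen g = d • y) : g.Monic ∧ g.natDegree = i := by
  have hdeg : g.natDegree ≤ i := natDegree_le_iff_degree_le.2 (mem_degreeLE.1 hg)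
  have hcoeff : algebraMap R F (g.coeff i) = 1 := by
    rw [← h.algebraMap_mul_coeff, ← Algebra.smul_def, ← LinearMap.map_smul_of_tower,
      ← hgy, ← aeval_map_algebraMap F,
      pb.coeff_aeval (natDegree_map_le.trans_lt (hdeg.trans_lt hi)), coeff_map]
  have hnat : g.natDegree = i :=
    natDegree_eq_of_le_of_coeff_ne_zero hdeg fun h0 => by simp [h0] at hcoeff
  refine ⟨?_, hnat⟩
  rw [Monic, leadingCoeff, hnat]
  exact FaithfulSMul.algebraMap_injective R F (by rw [hcoeff, map_one])

theorem exists_monic_aeval_eq_smul [IsIntegrallyClosed R] [IsFractionRing R F]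
    (hgen : IsIntegral R pb.gen) {d : ℕ → R} {y : ℕ → L}
    (hy : ∀ i < pb.dim, pb.IsLeadingGenerator R i (d i) (y i)) :
    ∃ f : ℕ → R[X], ∀ i < pb.dim,
      (f i).Monic ∧ (f i).natDegree = i ∧ aeval pb.gen (f i) = d i • y i := by
  have (i : ℕ) : ∃ g : R[X], i < pb.dim →
      g.Monic ∧ g.natDegree = i ∧ aeval pb.gen g = d i • y i := by
    by_cases hi : i < pb.dim
    · obtain ⟨g, hg, hgy⟩ := smul_mem_aevalDegreeLE hgen hy hi (hy i hi).mem
      obtain ⟨hmonic, hnat⟩ := (hy i hi).monic_of_aeval_eq_smul hi hg hgy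
      exact ⟨g, fun _ => ⟨hmonic, hnat, hgy⟩⟩
    · exact ⟨0, fun h => absurd h hi⟩
  choose f hf using this
  exact ⟨f, hf⟩

theorem exists_isLeadingGenerator_family [IsDomain R] [IsPrincipalIdealRing R]
    [IsFractionRing R F] [Algebra.IsSeparable F L] (hgen : IsIntegral R pb.gen) :
    ∃ (d : ℕ → R) (y : ℕ → L), y 0 = 1 ∧ ∀ i < pb.dim, pb.IsLeadingGenerator R i (d i) (y i) := by
  have (i : ℕ) : ∃ (d : R) (y : L), (i = 0 → y = 1) ∧
      (i < pb.dim → pb.IsLeadingGenerator R i d y) := by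
    rcases eq_or_ne i 0 with rfl | hi0
    · exact ⟨1, 1, fun _ => rfl, fun _ => isLeadingGenerator_zero⟩
    by_cases hi : i < pb.dim
    · obtain ⟨d, y, h⟩ := exists_isLeadingGenerator hgen hi
      exact ⟨d, y, fun h0 => absurd h0 hi0, fun _ => h⟩
    · exact ⟨0, 0, fun h0 => absurd h0 hi0, fun h => absurd h hi⟩
  choose d y hy0 hy using this
  exact ⟨d, y, hy0 0 rfl, hy⟩

theorem integralDegreeLT_le_span {d : ℕ → R} {y : ℕ → L}
    (hy : ∀ i < pb.dim, pb.IsLeadingGenerator R i (d i) (y i)) {i : ℕ} (hi : i ≤ pb.dim) :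
    pb.integralDegreeLT R i ≤ Submodule.span R (y '' Set.Iio i) := by
  induction i with
  | zero => rw [integralDegreeLT_zero]; exact bot_le
  | succ i ih =>
    intro z hz
    obtain ⟨r, hr⟩ := (hy i hi).exists_coeff_eq z hz
    have hsub := ih (by omega) (sub_smul_mem_integralDegreeLT hz (hy i hi).mem hr)
    rw [← sub_add_cancel z (r • y i)]
    exact add_mem (Submodule.span_mono (Set.image_mono (Set.Iio_subset_Iio i.le_succ)) hsub)
      (Submodule.smul_mem _ r (Submodule.subset_span ⟨i, i.lt_succ_self, rfl⟩))

theorem linearIndependent_of_isLeadingGenerator {d : ℕ → R} {y : ℕ → L}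
    (hy : ∀ i < pb.dim, pb.IsLeadingGenerator R i (d i) (y i)) :
    LinearIndependent F fun j : Fin pb.dim => y j := by
  have hdet : pb.basis.det (fun j : Fin pb.dim => y j) ≠ 0 := by
    rw [Module.Basis.det_apply, Matrix.det_of_isUpperTriangular]
    · refine Finset.prod_ne_zero_iff.2 fun j _ => ?_
      rw [Module.Basis.toMatrix_apply, ← pb.coeff_of_lt j.2]
      exact right_ne_zero_of_mul_eq_one (hy j j.2).algebraMap_mul_coeff
    · intro i j hji
      rw [Module.Basis.toMatrix_apply, ← pb.coeff_of_lt i.2]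
      exact (hy j j.2).mem.2 i hji
  exact (pb.basis.is_basis_iff_det.2 (isUnit_iff_ne_zero.2 hdet)).1

theorem exists_basis_integralClosure [FaithfulSMul R F] {d : ℕ → R} {y : ℕ → L}
    (hy : ∀ i < pb.dim, pb.IsLeadingGenerator R i (d i) (y i)) :
    ∃ b : Module.Basis (Fin pb.dim) R (integralClosure R L), ∀ j, (b j : L) = y j := by
  let v : Fin pb.dim → integralClosure R L := fun j => ⟨y j, (hy j j.2).mem.1⟩
  have hli : LinearIndependent R v :=
    LinearIndependent.of_comp (integralClosure R L).val.toLinearMap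
      ((linearIndependent_of_isLeadingGenerator hy).restrict_scalars' R)
  have hsp : ⊤ ≤ Submodule.span R (Set.range v) := by
    rintro ⟨z, hz⟩ -
    have hrange : y '' Set.Iio pb.dim = (integralClosure R L).val.toLinearMap '' Set.range v := by
      rw [← Set.range_comp, ← Fin.range_val, ← Set.range_comp]
      rfl
    have hmem := integralDegreeLT_le_span hy le_rfl (mem_integralDegreeLT_dim hz)
    rw [hrange, Submodule.span_image] at hmem
    obtain ⟨w, hw, hwz⟩ := hmem
    rwa [show w = ⟨z, hz⟩ from Subtype.ext hwz] at hw
  exact ⟨Module.Basis.mk hli hsp, fun j => by rw [Module.Basis.mk_apply]⟩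

end Integral

end PowerBasis

/-- **Existence of a normalised integral basis.**
Let `R` be a PID with fraction field `F` a number field, `L/F` a finite extension of
degree `n`, `S = integralClosure R L` and `α ∈ S` with `F(α) = L`.  Then there are
`d₁, …, d_{n-1} ∈ R` and monic `f_i ∈ R[X]` of degree `i` such that
`{1, f₁(α)/d₁, …, f_{n-1}(α)/d_{n-1}}` is an `R`-basis of `S`. -/
theorem normalised_integral_basis_exists
    (R F L : Type*) [CommRing R] [IsDomain R] [IsPrincipalIdealRing R]
    [Field F] [Algebra R F] [IsFractionRing R F] [NumberField F]
    [Field L] [Algebra F L] [FiniteDimensional F L]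
    [Algebra R L] [IsScalarTower R F L]
    (n : ℕ) (hn : Module.finrank F L = n)
    (α : L) (hαint : α ∈ integralClosure R L)
    (hgen : Algebra.adjoin F {α} = ⊤) :
    ∃ (d : ℕ → R) (f : ℕ → R[X])
      (b : Module.Basis (Fin n) R (integralClosure R L)),
      (∀ i, 1 ≤ i → i ≤ n - 1 → (f i).Monic ∧ (f i).natDegree = i) ∧
      (∀ i : Fin n,
        ((i : ℕ) = 0 → ((b i : L) = 1)) ∧
        ((i : ℕ) ≠ 0 →
          algebraMap R L (d (i : ℕ)) * (b i : L) = aeval α (f (i : ℕ)))) := by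
  have hαF : IsIntegral F α := .of_finite F α
  let pb := PowerBasis.ofAdjoinEqTop' hαF hgen
  have hpb : pb.gen = α := PowerBasis.ofAdjoinEqTop'_gen hαF hgen
  have hdim : pb.dim = n := by rw [← hn, pb.finrank]
  have hαR : IsIntegral R pb.gen := hpb ▸ hαint
  obtain ⟨d, y, hy0, hy⟩ := pb.exists_isLeadingGenerator_family hαR
  obtain ⟨b, hb⟩ := pb.exists_basis_integralClosure hy
  obtain ⟨f, hf⟩ := pb.exists_monic_aeval_eq_smul hαR hy
  refine ⟨d, f, b.reindex (finCongr hdim), fun i _ hi => ?_, fun i => ⟨fun hi => ?_, fun _ => ?_⟩⟩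
  · exact (hf i (by omega)).imp_right And.left
  · simp [hb, hi, hy0]
  · rw [Module.Basis.reindex_apply, hb, ← Algebra.smul_def, ← hpb, (hf i (by simp [hdim])).2.2]
    rfl
end

section
/- Let {1, f₁(α)/d₁, …, f_{n−1}(α)/d_{n−1}} be a normalised integral basis of S over R. If g ∈ R[X] is a monic polynomial of degree i (1 ≤ i ≤ n−1) and q ∈ R is such that g(α)/q ∈ S, then q divides d_i in R. -/
/-!
Set `pⱼ = fⱼ`, `eⱼ = dⱼ` for `j ≥ 1` and `p₀ = e₀ = 1`, so that `eⱼ bⱼ = pⱼ(α)` with `pⱼ` monic of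
degree `j`, and write `g(α)/q = ∑ cⱼ bⱼ`. Since `α` has degree `n` over `F`, evaluation at `α` is
injective on polynomials of degree `< n`, so `g = ∑ (q cⱼ / eⱼ) pⱼ` in `F[X]`. This system is
triangular: comparing coefficients from the top down gives `cⱼ = 0` for `j > i`, and then
`q cᵢ / dᵢ = 1`, i.e. `dᵢ = q cᵢ`.
-/

open Polynomial

namespace Polynomial

variable {K : Type*} [Semiring K]

theorem degree_sum_fin_smul_lt {m : ℕ} {p : ℕ → K[X]} (hp : ∀ j < m, (p j).natDegree ≤ j)
    (a : Fin m → K) : (∑ j : Fin m, a j • p j).degree < m := by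
  rw [← mem_degreeLT]
  refine Submodule.sum_mem _ fun j _ => Submodule.smul_mem _ _ (mem_degreeLT.2 ?_)
  exact degree_le_natDegree.trans_lt (by exact_mod_cast (hp j j.isLt).trans_lt j.isLt)

theorem coeff_sum_fin_smul_of_monic {p : ℕ → K[X]} {i m : ℕ}
    (hp : ∀ j < m, (p j).Monic ∧ (p j).natDegree = j) (a : Fin m → K)
    (hdeg : (∑ j : Fin m, a j • p j).natDegree ≤ i) (him : i < m) :
    (∑ j : Fin m, a j • p j).coeff i = a ⟨i, him⟩ := by
  have hlead : ∀ k < m, (p k).coeff k = 1 := fun k hk => by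
    simpa only [(hp k hk).2] using (hp k hk).1.coeff_natDegree
  induction m, him using Nat.le_induction with
  | base =>
    rw [Fin.sum_univ_castSucc]
    simp only [Fin.val_castSucc, Fin.val_last]
    rw [coeff_add, coeff_smul, hlead i (by omega), smul_eq_mul, mul_one,
      coeff_eq_zero_of_degree_lt (degree_sum_fin_smul_lt (fun j hj => (hp j (by omega)).2.le) _),
      zero_add]
    rfl
  | succ m hm ih =>
    rw [Fin.sum_univ_castSucc] at hdeg ⊢
    simp only [Fin.val_castSucc, Fin.val_last] at hdeg ⊢
    have ham : a (Fin.last m) = 0 := by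
      have h := coeff_eq_zero_of_natDegree_lt (hdeg.trans_lt hm)
      rwa [coeff_add, coeff_smul, hlead m (by omega), smul_eq_mul, mul_one,
        coeff_eq_zero_of_degree_lt (degree_sum_fin_smul_lt (fun j hj => (hp j (by omega)).2.le) _),
        zero_add] at h
    rw [ham, zero_smul, add_zero] at hdeg ⊢
    exact ih (fun j hj => hp j (by omega)) _ hdeg (fun k hk => hlead k (by omega))

end Polynomial

section PrimitiveElement

variable {F L : Type*} [Field F] [Field L] [Algebra F L] {α : L}

theorem aeval_sum_div_smul_map {R ι : Type*} [CommRing R] [Fintype ι] [Algebra R F] [Algebra R L]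
    [IsScalarTower R F L] {x : ι → L} {e : ι → R} {p : ι → R[X]}
    (hx : ∀ j, algebraMap R L (e j) * x j = aeval α (p j)) (he : ∀ j, algebraMap R F (e j) ≠ 0)
    (c : ι → R) :
    aeval α (∑ j, (algebraMap R F (c j) / algebraMap R F (e j)) • (p j).map (algebraMap R F)) =
      ∑ j, algebraMap R L (c j) * x j := by
  refine (map_sum _ _ _).trans (Finset.sum_congr rfl fun j _ => ?_)
  rw [map_smul, aeval_map_algebraMap, ← hx, Algebra.smul_def, ← mul_assoc,
    IsScalarTower.algebraMap_apply R F L (e j), ← map_mul, div_mul_cancel₀ _ (he j),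
    ← IsScalarTower.algebraMap_apply]

variable [FiniteDimensional F L]

theorem eq_of_aeval_eq_of_degree_lt_finrank (hgen : Algebra.adjoin F {α} = ⊤) {p₁ p₂ : F[X]}
    (h : aeval α p₁ = aeval α p₂) (h₁ : p₁.degree < Module.finrank F L)
    (h₂ : p₂.degree < Module.finrank F L) : p₁ = p₂ := by
  have hα : IsIntegral F α := .of_finite F α
  rw [(PowerBasis.ofAdjoinEqTop hα hgen).finrank, PowerBasis.ofAdjoinEqTop_dim,
    ← degree_eq_natDegree (minpoly.ne_zero hα)] at h₁ h₂
  by_contra hne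
  have hdeg := minpoly.degree_le_of_ne_zero F α (sub_ne_zero.2 hne) (by rw [map_sub, h, sub_self])
  exact hdeg.not_gt ((degree_sub_le _ _).trans_lt (max_lt h₁ h₂))

theorem Polynomial.Monic.aeval_ne_zero_of_natDegree_lt_finrank {R : Type*} [CommRing R]
    [Algebra R F] [Algebra R L] [IsScalarTower R F L] (hgen : Algebra.adjoin F {α} = ⊤)
    {p : R[X]} (hp : p.Monic) (hdeg : p.natDegree < Module.finrank F L) : aeval α p ≠ 0 := by
  intro h
  refine (hp.map (algebraMap R F)).ne_zero (eq_of_aeval_eq_of_degree_lt_finrank hgen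
    (by rwa [aeval_map_algebraMap, map_zero]) ?_ (by simp))
  rw [degree_eq_natDegree (hp.map _).ne_zero, hp.natDegree_map]
  exact_mod_cast hdeg

theorem algebraMap_eq_of_aeval_monic_eq_sum {R : Type*} [CommRing R] [Algebra R F] [Algebra R L]
    [IsScalarTower R F L] (hgen : Algebra.adjoin F {α} = ⊤) {x : Fin (Module.finrank F L) → L}
    {e : ℕ → R} {p : ℕ → R[X]}
    (hp : ∀ j < Module.finrank F L, (p j).Monic ∧ (p j).natDegree = j)
    (hx : ∀ j : Fin _, algebraMap R L (e j) * x j = aeval α (p j))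
    (c : Fin (Module.finrank F L) → R)
    {g : R[X]} (hg : g.Monic) (hi : g.natDegree < Module.finrank F L)
    (h : aeval α g = ∑ j, algebraMap R L (c j) * x j) :
    algebraMap R F (c ⟨_, hi⟩) = algebraMap R F (e g.natDegree) := by
  have he (j : Fin (Module.finrank F L)) : algebraMap R F (e j) ≠ 0 := by
    intro h0
    have hj := hx j
    rw [IsScalarTower.algebraMap_apply R F L, h0, map_zero, zero_mul] at hj
    exact (hp j j.isLt).1.aeval_ne_zero_of_natDegree_lt_finrank hgen
      ((hp j j.isLt).2.trans_lt j.isLt) hj.symm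
  have hpF (j : ℕ) (hj : j < Module.finrank F L) :
      ((p j).map (algebraMap R F)).Monic ∧ ((p j).map (algebraMap R F)).natDegree = j :=
    ⟨(hp j hj).1.map _, ((hp j hj).1.natDegree_map _).trans (hp j hj).2⟩
  set a := fun j => algebraMap R F (c j) / algebraMap R F (e j) with ha
  have hsum : g.map (algebraMap R F) = ∑ j, a j • (p j).map (algebraMap R F) := by
    refine eq_of_aeval_eq_of_degree_lt_finrank hgen ?_ ?_
      (degree_sum_fin_smul_lt (fun j hj => (hpF j hj).2.le) a)
    · rw [aeval_map_algebraMap, h, aeval_sum_div_smul_map hx he]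
    · rw [degree_eq_natDegree (hg.map _).ne_zero, hg.natDegree_map]
      exact_mod_cast hi
  have hai := coeff_sum_fin_smul_of_monic hpF a (by rw [← hsum, hg.natDegree_map]) hi
  rwa [← hsum, coeff_map, hg.coeff_natDegree, map_one, ha, eq_comm, div_eq_one_iff_eq (he _)]
    at hai

end PrimitiveElement

theorem normalised_integral_basis_divides_general
    (R F L : Type*) [CommRing R]
    [Field F] [Algebra R F] [IsFractionRing R F]
    [Field L] [Algebra F L] [FiniteDimensional F L]
    [Algebra R L] [IsScalarTower R F L]
    (n : ℕ) (hn : Module.finrank F L = n)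
    (α : L)
    (hgen : Algebra.adjoin F {α} = ⊤)
    (d : ℕ → R) (f : ℕ → R[X])
    (b : Module.Basis (Fin n) R (integralClosure R L))
    (hf : ∀ i, 1 ≤ i → i ≤ n - 1 → (f i).Monic ∧ (f i).natDegree = i)
    (hb : ∀ i : Fin n,
      ((i : ℕ) = 0 → ((b i : L) = 1)) ∧
      ((i : ℕ) ≠ 0 →
        algebraMap R L (d (i : ℕ)) * (b i : L) = aeval α (f (i : ℕ))))
    (i : ℕ) (hi1 : 1 ≤ i) (hi2 : i ≤ n - 1)
    (g : R[X]) (hgmonic : g.Monic) (hgdeg : g.natDegree = i)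
    (q : R)
    (hq : ∃ s : integralClosure R L, algebraMap R L q * (s : L) = aeval α g) :
    q ∣ d i := by
  obtain ⟨s, hs⟩ := hq
  subst hn
  have hin : i < Module.finrank F L := by have := Module.finrank_pos (R := F) (M := L); omega
  set e : ℕ → R := fun j => if j = 0 then 1 else d j with he_def
  set p : ℕ → R[X] := fun j => if j = 0 then 1 else f j with hp_def
  have hp : ∀ j < Module.finrank F L, (p j).Monic ∧ (p j).natDegree = j := by
    intro j hj
    by_cases hj0 : j = 0
    · simp [hp_def, hj0]
    · simpa [hp_def, hj0] using hf j (by omega) (by omega)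
  have heb : ∀ j : Fin _, algebraMap R L (e j) * b j = aeval α (p j) := by
    intro j
    by_cases hj0 : (j : ℕ) = 0
    · simp [he_def, hp_def, hj0, (hb j).1 hj0]
    · simpa [he_def, hp_def, hj0] using (hb j).2 hj0
  set c := b.repr s
  have hexp : aeval α g = ∑ j, algebraMap R L (q * c j) * b j := by
    rw [← hs, ← b.sum_repr s]
    simp [Finset.mul_sum, Algebra.smul_def, mul_assoc, c]
  have hqc := algebraMap_eq_of_aeval_monic_eq_sum hgen hp heb _ hgmonic (hgdeg ▸ hin) hexp
  simp only [hgdeg, he_def, if_neg (by omega : i ≠ 0)] at hqc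
  exact ⟨_, (IsFractionRing.injective R F hqc).symm⟩

/-- If `{1, f₁(α)/d₁, …, f_{n-1}(α)/d_{n-1}}` is a normalised integral basis of `S` over `R`,
`g ∈ R[X]` is monic of degree `i` (`1 ≤ i ≤ n-1`) and `q ∈ R` satisfies `g(α)/q ∈ S`,
then `q ∣ dᵢ` in `R`. -/
theorem normalised_integral_basis_divides
    (R F L : Type*) [CommRing R] [IsDomain R] [IsPrincipalIdealRing R]
    [Field F] [Algebra R F] [IsFractionRing R F] [NumberField F]
    [Field L] [Algebra F L] [FiniteDimensional F L]
    [Algebra R L] [IsScalarTower R F L]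
    (n : ℕ) (hn : Module.finrank F L = n)
    (α : L) (hαint : α ∈ integralClosure R L)
    (hgen : Algebra.adjoin F {α} = ⊤)
    (d : ℕ → R) (f : ℕ → R[X])
    (b : Module.Basis (Fin n) R (integralClosure R L))
    (hf : ∀ i, 1 ≤ i → i ≤ n - 1 → (f i).Monic ∧ (f i).natDegree = i)
    (hb : ∀ i : Fin n,
      ((i : ℕ) = 0 → ((b i : L) = 1)) ∧
      ((i : ℕ) ≠ 0 →
        algebraMap R L (d (i : ℕ)) * (b i : L) = aeval α (f (i : ℕ))))
    (i : ℕ) (hi1 : 1 ≤ i) (hi2 : i ≤ n - 1)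
    (g : R[X]) (hgmonic : g.Monic) (hgdeg : g.natDegree = i)
    (q : R)
    (hq : ∃ s : integralClosure R L, algebraMap R L q * (s : L) = aeval α g) :
    q ∣ d i :=
  normalised_integral_basis_divides_general R F L n hn α hgen d f b hf hb i hi1 hi2 g hgmonic hgdeg
    q hq
end

section
/- Let {1, f₁(α)/d₁, …, f_{n−1}(α)/d_{n−1}} be a normalised integral basis of S over R. Then for all i, j ≥ 1 with i + j < n, the product d_i·d_j divides d_{i+j} in R. -/
/-!
Write `k = i + j`. Expanding the integral element `bᵢ bⱼ = Σ cₘ bₘ` in the basis and using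
`bₘ = fₘ(α) / dₘ` gives `fᵢ(α) fⱼ(α) = Σ (dᵢ dⱼ cₘ / dₘ) fₘ(α)`. Both sides are polynomials in `α`
over `F` of degree `< n = [F(α) : F]`, so `fᵢ fⱼ = Σ (dᵢ dⱼ cₘ / dₘ) fₘ` in `F[X]`. The `fₘ` are
monic of degree `m` and `fᵢ fⱼ` is monic of degree `k`, so comparing coefficients from the top down
forces the coefficient of `f_k` to be `1`: `d_k = dᵢ dⱼ c_k`.
-/

open Polynomial

namespace Polynomial

variable {R : Type*} [Semiring R] {n : ℕ} {p : Fin n → R[X]}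

theorem coeff_sum_C_mul_of_triangular (hmonic : ∀ m, (p m).Monic)
    (hdeg : ∀ m, (p m).natDegree = m) {e : Fin n → R} {k : Fin n}
    (he : ∀ m, k < m → e m = 0) : (∑ m, C (e m) * p m).coeff k = e k := by
  rw [finsetSum_coeff, Finset.sum_eq_single k]
  · rw [coeff_C_mul, ← hdeg k, (hmonic k).coeff_natDegree, mul_one]
  · intro m _ hmk
    rcases lt_or_gt_of_ne hmk with hlt | hgt
    · rw [coeff_C_mul, coeff_eq_zero_of_natDegree_lt (by rw [hdeg]; exact hlt), mul_zero]
    · rw [he m hgt, C_0, zero_mul, coeff_zero]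
  · exact fun h => absurd (Finset.mem_univ k) h

theorem eq_zero_of_natDegree_sum_C_mul_le (hmonic : ∀ m, (p m).Monic)
    (hdeg : ∀ m, (p m).natDegree = m) {e : Fin n → R} {k : ℕ}
    (hsum : (∑ m, C (e m) * p m).natDegree ≤ k) (m : Fin n) (hkm : k < m) : e m = 0 := by
  classical
  by_contra hem
  set s := Finset.univ.filter fun l : Fin n => k < l ∧ e l ≠ 0
  have hs : s.Nonempty := ⟨m, by simp [s, hkm, hem]⟩
  obtain ⟨hkM, heM⟩ := (Finset.mem_filter.1 (s.max'_mem hs)).2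
  have habove : ∀ l, s.max' hs < l → e l = 0 := fun l hl => by
    by_contra hel
    exact absurd (s.le_max' l (by simp [s, hel, hkM.trans hl])) (not_le.2 hl)
  apply heM
  rw [← coeff_sum_C_mul_of_triangular hmonic hdeg habove]
  exact coeff_eq_zero_of_natDegree_lt (hsum.trans_lt hkM)

theorem natDegree_sum_C_mul_le_pred (hdeg : ∀ m, (p m).natDegree = m) (e : Fin n → R) :
    (∑ m, C (e m) * p m).natDegree ≤ n - 1 :=
  natDegree_sum_le_of_forall_le _ _ fun m _ =>
    (natDegree_C_mul_le _ _).trans (by rw [hdeg]; have := m.isLt; omega)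

theorem eq_one_of_sum_C_mul_eq_monic (hmonic : ∀ m, (p m).Monic)
    (hdeg : ∀ m, (p m).natDegree = m) {e : Fin n → R} {q : R[X]} (hq : q.Monic)
    {k : Fin n} (hqk : q.natDegree = k) (hsum : ∑ m, C (e m) * p m = q) : e k = 1 := by
  have he := eq_zero_of_natDegree_sum_C_mul_le hmonic hdeg (hsum ▸ hqk.le)
  rw [← coeff_sum_C_mul_of_triangular hmonic hdeg he, hsum, ← hqk, hq.coeff_natDegree]

end Polynomial

section PrimitiveElement

variable {F L : Type*} [Field F] [Field L] [Algebra F L] [FiniteDimensional F L] {α : L}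

theorem minpoly_natDegree_eq_finrank_of_adjoin_eq_top (hgen : Algebra.adjoin F {α} = ⊤) :
    (minpoly F α).natDegree = Module.finrank F L := by
  have hα : IsIntegral F α := .of_finite F α
  refine (Field.primitive_element_iff_minpoly_natDegree_eq F α).mp ?_
  apply IntermediateField.toSubalgebra_injective
  rw [IntermediateField.adjoin_simple_toSubalgebra_of_isAlgebraic hα.isAlgebraic, hgen,
    IntermediateField.top_toSubalgebra]

theorem eq_zero_of_aeval_eq_zero_of_natDegree_lt_finrank (hgen : Algebra.adjoin F {α} = ⊤)
    {p : F[X]} (hp : aeval α p = 0) (hdeg : p.natDegree < Module.finrank F L) : p = 0 :=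
  eq_zero_of_dvd_of_natDegree_lt (minpoly.dvd F α hp)
    (minpoly_natDegree_eq_finrank_of_adjoin_eq_top hgen ▸ hdeg)

end PrimitiveElement

section NormalisedBasis

variable {R F L : Type*} [CommRing R] [Field F] [Algebra R F]
  [Field L] [Algebra F L] [FiniteDimensional F L] [Algebra R L] [IsScalarTower R F L] {α : L}

theorem aeval_ne_zero_of_monic_of_natDegree_lt_finrank (hgen : Algebra.adjoin F {α} = ⊤)
    {p : R[X]} (hp : p.Monic) (hdeg : p.natDegree < Module.finrank F L) : aeval α p ≠ 0 := by
  intro h0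
  refine (hp.map (algebraMap R F)).ne_zero (eq_zero_of_aeval_eq_zero_of_natDegree_lt_finrank
    hgen ?_ ?_)
  · rwa [aeval_map_algebraMap]
  · rwa [hp.natDegree_map]

theorem Module.Basis.coe_eq_sum_repr {ι : Type*} [Fintype ι] {S : Subalgebra R L}
    (b : Module.Basis ι R S) (s : S) : (s : L) = ∑ m, algebraMap R L (b.repr s m) * b m := by
  conv_lhs => rw [← b.sum_repr s]
  simp [Algebra.smul_def]

variable [IsFractionRing R F] {n : ℕ} {b : Module.Basis (Fin n) R (integralClosure R L)}
  {d : Fin n → R} {g : Fin n → R[X]}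

theorem denominator_eq_mul_repr_of_aeval_eq (hgen : Algebra.adjoin F {α} = ⊤)
    (hn : Module.finrank F L = n) (hmonic : ∀ m, (g m).Monic) (hdeg : ∀ m, (g m).natDegree = m)
    (hb : ∀ m, algebraMap R L (d m) * b m = aeval α (g m)) {p : R[X]} (hp : p.Monic)
    {k : Fin n} (hpk : p.natDegree = k) {r : R} {s : integralClosure R L}
    (hs : aeval α p = algebraMap R L r * s) : d k = r * b.repr s k := by
  have hd : ∀ m, algebraMap R F (d m) ≠ 0 := fun m hm => by
    refine aeval_ne_zero_of_monic_of_natDegree_lt_finrank hgen (hmonic m) ?_ ?_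
    · rw [hdeg, hn]; exact m.isLt
    · rw [← hb, IsScalarTower.algebraMap_apply R F L, hm, map_zero, zero_mul]
  have hdegF : ∀ m, ((g m).map (algebraMap R F)).natDegree = m := fun m => by
    rw [(hmonic m).natDegree_map, hdeg]
  set e : Fin n → F := fun m => algebraMap R F (r * b.repr s m) / algebraMap R F (d m)
  have hsum : ∑ m, C (e m) * (g m).map (algebraMap R F) = p.map (algebraMap R F) := by
    rw [← sub_eq_zero]
    apply eq_zero_of_aeval_eq_zero_of_natDegree_lt_finrank hgen
    · rw [map_sub, map_sum, aeval_map_algebraMap, hs, b.coe_eq_sum_repr s, Finset.mul_sum,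
        sub_eq_zero]
      refine Finset.sum_congr rfl fun m _ => ?_
      have hem :
          algebraMap F L (e m) * algebraMap R L (d m) = algebraMap R L (r * b.repr s m) := by
        rw [IsScalarTower.algebraMap_apply R F L (d m), ← map_mul, div_mul_cancel₀ _ (hd m),
          ← IsScalarTower.algebraMap_apply]
      rw [map_mul, aeval_C, aeval_map_algebraMap, ← hb, ← mul_assoc, hem, map_mul, mul_assoc]
    · refine (natDegree_sub_le _ _).trans_lt (max_lt ?_ ?_)
      · exact (natDegree_sum_C_mul_le_pred hdegF e).trans_lt (by have := k.isLt; omega)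
      · rw [hp.natDegree_map, hpk, hn]; exact k.isLt
  have hek : e k = 1 :=
    eq_one_of_sum_C_mul_eq_monic (fun m => (hmonic m).map _) hdegF (hp.map _)
      (by rw [hp.natDegree_map, hpk]) hsum
  exact IsFractionRing.injective R F ((div_eq_one_iff_eq (hd k)).1 hek).symm

end NormalisedBasis

theorem normalised_integral_basis_mul_dvd_general
    (R F L : Type*) [CommRing R]
    [Field F] [Algebra R F] [IsFractionRing R F]
    [Field L] [Algebra F L] [FiniteDimensional F L]
    [Algebra R L] [IsScalarTower R F L]
    (n : ℕ) (hn : Module.finrank F L = n)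
    (α : L)
    (hgen : Algebra.adjoin F {α} = ⊤)
    (d : ℕ → R) (f : ℕ → R[X])
    (b : Module.Basis (Fin n) R (integralClosure R L))
    (hf : ∀ i, 1 ≤ i → i ≤ n - 1 → (f i).Monic ∧ (f i).natDegree = i)
    (hb : ∀ i : Fin n,
      ((i : ℕ) = 0 → ((b i : L) = 1)) ∧
      ((i : ℕ) ≠ 0 →
        algebraMap R L (d (i : ℕ)) * (b i : L) = aeval α (f (i : ℕ)))) :
    ∀ i j : ℕ, 1 ≤ i → 1 ≤ j → i + j < n → d i * d j ∣ d (i + j) := by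
  intro i j hi hj hij
  -- `Function.update · 0 1` extends `d` and `f` by `d₀ = 1`, `f₀ = 1`, matching `b₀ = 1`.
  have hg : ∀ m : Fin n, (Function.update f 0 1 m).Monic ∧
      (Function.update f 0 1 m).natDegree = m := fun m => by
    rcases Nat.eq_zero_or_pos m with h0 | hpos
    · simp [h0]
    · simpa [Function.update_of_ne hpos.ne'] using hf m hpos (by omega)
  have hbg : ∀ m : Fin n, algebraMap R L (Function.update d 0 1 m) * b m =
      aeval α (Function.update f 0 1 m) := fun m => by
    by_cases h0 : (m : ℕ) = 0
    · simp [h0, (hb m).1 h0]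
    · simpa [Function.update_of_ne h0] using (hb m).2 h0
  have hfi := hf i hi (by omega)
  have hfj := hf j hj (by omega)
  have hbi := (hb ⟨i, by omega⟩).2 (Nat.pos_iff_ne_zero.mp hi)
  have hbj := (hb ⟨j, by omega⟩).2 (Nat.pos_iff_ne_zero.mp hj)
  have hprod : aeval α (f i * f j) =
      algebraMap R L (d i * d j) * ↑(b ⟨i, by omega⟩ * b ⟨j, by omega⟩) := by
    rw [map_mul, map_mul, ← hbi, ← hbj]
    push_cast
    ring
  have key := denominator_eq_mul_repr_of_aeval_eq (k := ⟨i + j, hij⟩) hgen hn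
    (fun m => (hg m).1) (fun m => (hg m).2) hbg (hfi.1.mul hfj.1)
    (by rw [hfi.1.natDegree_mul hfj.1, hfi.2, hfj.2]) hprod
  rw [Function.update_of_ne (a := i + j) (by omega)] at key
  exact ⟨_, key⟩

/-- If `{1, f₁(α)/d₁, …, f_{n-1}(α)/d_{n-1}}` is a normalised integral basis of `S` over `R`,
then `dᵢ·dⱼ ∣ d_{i+j}` in `R` whenever `i, j ≥ 1` and `i + j < n`. -/
theorem normalised_integral_basis_mul_dvd
    (R F L : Type*) [CommRing R] [IsDomain R] [IsPrincipalIdealRing R]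
    [Field F] [Algebra R F] [IsFractionRing R F] [NumberField F]
    [Field L] [Algebra F L] [FiniteDimensional F L]
    [Algebra R L] [IsScalarTower R F L]
    (n : ℕ) (hn : Module.finrank F L = n)
    (α : L) (hαint : α ∈ integralClosure R L)
    (hgen : Algebra.adjoin F {α} = ⊤)
    (d : ℕ → R) (f : ℕ → R[X])
    (b : Module.Basis (Fin n) R (integralClosure R L))
    (hf : ∀ i, 1 ≤ i → i ≤ n - 1 → (f i).Monic ∧ (f i).natDegree = i)
    (hb : ∀ i : Fin n,
      ((i : ℕ) = 0 → ((b i : L) = 1)) ∧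
      ((i : ℕ) ≠ 0 →
        algebraMap R L (d (i : ℕ)) * (b i : L) = aeval α (f (i : ℕ)))) :
    ∀ i j : ℕ, 1 ≤ i → 1 ≤ j → i + j < n → d i * d j ∣ d (i + j) :=
  normalised_integral_basis_mul_dvd_general R F L n hn α hgen d f b hf hb
end

section
/- Let {1, f₁(α)/d₁, …, f_{n−1}(α)/d_{n−1}} be a normalised integral basis of S over R. Then d₁^{n(n−1)} divides disc(1, α, …, α^{n−1}) in R. -/
/-!
Write `f₁ = X + c`. The basis element `β` with `d₁β = α + c` is integral and `α = d₁β − c`.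
Expressing `1, α, …, α^{n-1}` in `1, β, …, β^{n-1}` is an upper triangular change of basis with
diagonal `1, d₁, …, d₁^{n-1}`, so `disc(αⁱ) = d₁^{n(n-1)} · disc(βⁱ)`. Since `β` is integral, so is
`disc(βⁱ)`, which therefore lies in the integrally closed ring `R`.
-/

open Polynomial Matrix

namespace Polynomial

variable {A : Type*} [CommRing A]

noncomputable def powCoeffMatrix (p : A[X]) (n : ℕ) : Matrix (Fin n) (Fin n) A :=
  Matrix.of fun i j => (p ^ (j : ℕ)).coeff i

variable {p : A[X]} (hp : p.natDegree ≤ 1) (n : ℕ)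
include hp

theorem vecMul_powCoeffMatrix {B : Type*} [CommRing B] [Algebra A B] (x : B) :
    (fun i : Fin n => x ^ (i : ℕ)) ᵥ* (p.powCoeffMatrix n).map (algebraMap A B) =
      fun j : Fin n => aeval x p ^ (j : ℕ) := by
  funext j
  have hdeg : (p ^ (j : ℕ)).natDegree < n :=
    (natDegree_pow_le_of_le _ hp).trans_lt (by simp)
  rw [← map_pow, aeval_eq_sum_range' hdeg, ← Fin.sum_univ_eq_sum_range]
  simp only [vecMul, dotProduct, map_apply, powCoeffMatrix, of_apply, Algebra.smul_def, mul_comm]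

theorem det_powCoeffMatrix : (p.powCoeffMatrix n).det = p.coeff 1 ^ ∑ j : Fin n, (j : ℕ) := by
  have htri : (p.powCoeffMatrix n).IsUpperTriangular := fun i j hji =>
    coeff_eq_zero_of_natDegree_lt <| (natDegree_pow_le_of_le _ hp).trans_lt (by simpa using hji)
  rw [det_of_isUpperTriangular htri, ← Finset.prod_pow_eq_pow_sum]
  refine Finset.prod_congr rfl fun j _ => ?_
  simpa [powCoeffMatrix] using coeff_pow_of_natDegree_le (m := (j : ℕ)) hp

theorem det_powCoeffMatrix_sq : (p.powCoeffMatrix n).det ^ 2 = p.coeff 1 ^ (n * (n - 1)) := by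
  rw [det_powCoeffMatrix hp, ← pow_mul, Fin.sum_univ_eq_sum_range (fun j => j),
    Finset.sum_range_id_mul_two]

end Polynomial

theorem Algebra.discr_aeval_powers {A B : Type*} [CommRing A] [CommRing B] [Algebra A B]
    {p : A[X]} (hp : p.natDegree ≤ 1) (n : ℕ) (x : B) :
    Algebra.discr A (fun i : Fin n => aeval x p ^ (i : ℕ)) =
      p.coeff 1 ^ (n * (n - 1)) * Algebra.discr A (fun i : Fin n => x ^ (i : ℕ)) := by
  rw [← vecMul_powCoeffMatrix hp, Algebra.discr_of_matrix_vecMul, det_powCoeffMatrix_sq hp]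

theorem normalised_integral_basis_d1_pow_dvd_disc_general
    (R F L : Type*) [CommRing R] [IsDomain R] [IsPrincipalIdealRing R]
    [Field F] [Algebra R F] [IsFractionRing R F]
    [Field L] [Algebra F L] [FiniteDimensional F L]
    [Algebra R L] [IsScalarTower R F L]
    (n : ℕ)
    (α : L)
    (d : ℕ → R) (f : ℕ → R[X])
    (b : Module.Basis (Fin n) R (integralClosure R L))
    (hf : ∀ i, 1 ≤ i → i ≤ n - 1 → (f i).Monic ∧ (f i).natDegree = i)
    (hb : ∀ i : Fin n,
      ((i : ℕ) = 0 → ((b i : L) = 1)) ∧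
      ((i : ℕ) ≠ 0 →
        algebraMap R L (d (i : ℕ)) * (b i : L) = aeval α (f (i : ℕ))))
    (Dα : R) (hDα : algebraMap R F Dα = Algebra.discr F (fun i : Fin n => α ^ (i : ℕ))) :
    d 1 ^ (n * (n - 1)) ∣ Dα := by
  obtain hn | hn := lt_or_ge n 2
  · rw [Nat.mul_eq_zero.2 (by omega), pow_zero]
    exact one_dvd _
  set β : integralClosure R L := b ⟨1, hn⟩
  obtain ⟨hmonic, hdeg⟩ := hf 1 le_rfl (by omega)
  set p : F[X] := C (algebraMap R F (d 1)) * X - C (algebraMap R F ((f 1).coeff 0))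
  have hp : p.natDegree ≤ 1 := by simp only [p]; compute_degree
  have hα : aeval (β : L) p = α := by
    have hβ := (hb ⟨1, hn⟩).2 one_ne_zero
    rw [hmonic.eq_X_add_C hdeg] at hβ
    simp only [p, map_add, map_sub, map_mul, aeval_C, aeval_X,
      ← IsScalarTower.algebraMap_apply] at hβ ⊢
    linear_combination hβ
  obtain ⟨Dβ, hDβ⟩ := IsIntegrallyClosed.isIntegral_iff.1 <|
    Algebra.discr_isIntegral F fun i : Fin n => β.2.pow (i : ℕ)
  refine ⟨Dβ, IsFractionRing.injective R F ?_⟩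
  rw [map_mul, map_pow, hDα, hDβ, ← hα, Algebra.discr_aeval_powers hp]
  simp [p]

/-- If `{1, f₁(α)/d₁, …, f_{n-1}(α)/d_{n-1}}` is a normalised integral basis of `S` over `R`,
then `d₁^{n(n-1)}` divides `disc(1, α, …, α^{n-1})` in `R`. -/
theorem normalised_integral_basis_d1_pow_dvd_disc
    (R F L : Type*) [CommRing R] [IsDomain R] [IsPrincipalIdealRing R]
    [Field F] [Algebra R F] [IsFractionRing R F] [NumberField F]
    [Field L] [Algebra F L] [FiniteDimensional F L]
    [Algebra R L] [IsScalarTower R F L]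
    (n : ℕ) (hn : Module.finrank F L = n)
    (α : L) (hαint : α ∈ integralClosure R L)
    (hgen : Algebra.adjoin F {α} = ⊤)
    (d : ℕ → R) (f : ℕ → R[X])
    (b : Module.Basis (Fin n) R (integralClosure R L))
    (hf : ∀ i, 1 ≤ i → i ≤ n - 1 → (f i).Monic ∧ (f i).natDegree = i)
    (hb : ∀ i : Fin n,
      ((i : ℕ) = 0 → ((b i : L) = 1)) ∧
      ((i : ℕ) ≠ 0 →
        algebraMap R L (d (i : ℕ)) * (b i : L) = aeval α (f (i : ℕ))))
    (Dα : R) (hDα : algebraMap R F Dα = Algebra.discr F (fun i : Fin n => α ^ (i : ℕ))) :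
    d 1 ^ (n * (n - 1)) ∣ Dα :=
  normalised_integral_basis_d1_pow_dvd_disc_general R F L n α d f b hf hb Dα hDα
end

section
/- Let {1, f₁(α)/d₁, …, f_{n−1}(α)/d_{n−1}} be a normalised integral basis of S over R, fix i with 1 ≤ i ≤ n−1, and let g ∈ R[X] be any monic polynomial of degree i such that g(α)/d_i ∈ S. Then {1, f₁(α)/d₁, …, f_{i−1}(α)/d_{i−1}, g(α)/d_i, f_{i+1}(α)/d_{i+1}, …, f_{n−1}(α)/d_{n−1}} is also an R-module basis of S. -/
/-!
Write `bⱼ = Pⱼ(α)` with `Pⱼ = fⱼ / dⱼ ∈ F[X]` of degree exactly `j`, and put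
`t = s - bᵢ = q(α)` with `q = (g - fᵢ) / dᵢ`, of degree `< i` because `g` and `fᵢ` are both monic
of degree `i`. Expanding `t` in the basis gives `∑ cⱼ Pⱼ(α) = q(α)`; all polynomials involved have
degree `< n = deg (minpoly F α)`, so `∑ cⱼ Pⱼ = q`, and triangularity forces `cⱼ = 0` for `j ≥ i`.
Hence the `i`-th coordinate of `s` is `1`, and replacing `bᵢ` by `s` is an invertible change of
basis (a dilatransvection).
-/

open Polynomial

namespace Module.Basis

variable {ι R M : Type*} [Ring R] [AddCommGroup M] [Module R M] [DecidableEq ι]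

theorem exists_update_eq_of_isUnit_repr (b : Basis ι R M) (i : ι) {x : M}
    (hx : IsUnit (b.repr x i)) : ∃ b' : Basis ι R M, ⇑b' = Function.update b i x := by
  have hunit : IsUnit (1 + b.coord i (x - b i)) := by simpa using hx
  refine ⟨b.map (LinearEquiv.dilatransvection hunit), funext fun j => ?_⟩
  rcases eq_or_ne j i with rfl | hj
  · simp [LinearEquiv.dilatransvection.apply]
  · simp [LinearEquiv.dilatransvection.apply, hj]

end Module.Basis

namespace Polynomial

/-- For the largest `m` with `c m ≠ 0`, the coefficient of `X ^ m` in the sum is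
`c m * (p m).leadingCoeff ≠ 0`. -/
theorem eq_zero_of_degree_sum_smul_lt {A : Type*} [Semiring A] [NoZeroDivisors A] {n : ℕ}
    {p : Fin n → A[X]} (hp : ∀ j, (p j).degree = (j : ℕ)) {c : Fin n → A} {i : ℕ}
    (hlt : (∑ j, c j • p j).degree < i) {j : Fin n} (hij : i ≤ j) : c j = 0 := by
  classical
  by_contra hcj
  obtain ⟨m, hm, hmax⟩ := (Finset.univ.filter (c · ≠ 0)).exists_max_image (fun k => (k : ℕ))
    ⟨j, by simpa using hcj⟩
  simp only [Finset.mem_filter, Finset.mem_univ, true_and] at hm hmax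
  have hcoeff : (∑ k, c k • p k).coeff m = c m * (p m).leadingCoeff := by
    rw [finsetSum_coeff, Finset.sum_eq_single m]
    · rw [coeff_smul, leadingCoeff, natDegree_eq_of_degree_eq_some (hp m), smul_eq_mul]
    · intro k _ hkm
      by_cases hck : c k = 0
      · simp [hck]
      · have hkm' : (k : ℕ) < m := (hmax k hck).lt_of_ne (Fin.val_ne_of_ne hkm)
        rw [coeff_smul, coeff_eq_zero_of_degree_lt (by rw [hp k]; exact Nat.cast_lt.mpr hkm'),
          smul_zero]
    · simp
  have hpm : p m ≠ 0 := ne_zero_of_coe_le_degree (hp m).ge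
  have hle : (m : WithBot ℕ) ≤ (∑ k, c k • p k).degree :=
    le_degree_of_ne_zero (by rw [hcoeff]; exact mul_ne_zero hm (leadingCoeff_ne_zero.mpr hpm))
  exact (hle.trans_lt hlt).not_ge (Nat.cast_le.mpr (hij.trans (hmax j hcj)))

section Field

variable {K A : Type*} [Field K] [Ring A] [Algebra K A] {α : A}

theorem eq_zero_of_sum_smul_aeval_eq_aeval {n : ℕ} (hn : n ≤ (minpoly K α).natDegree)
    {p : Fin n → K[X]} (hp : ∀ j, (p j).degree = (j : ℕ)) {c : Fin n → K} {q : K[X]} {i : ℕ}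
    (hq : q.degree < i) (h : ∑ j, c j • aeval α (p j) = aeval α q) {j : Fin n} (hij : i ≤ j) :
    c j = 0 := by
  refine eq_zero_of_degree_sum_smul_lt hp ?_ hij
  suffices ∑ j, c j • p j = q by rwa [this]
  have hmem : ∑ j, c j • p j - q ∈ degreeLT K n := by
    refine sub_mem (Submodule.sum_mem _ fun k _ => Submodule.smul_mem _ _ ?_) ?_ <;>
      rw [mem_degreeLT]
    · rw [hp k]; exact Nat.cast_lt.mpr k.isLt
    · exact hq.trans_le (Nat.cast_le.mpr (hij.trans j.isLt.le))
  by_contra hne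
  have hroot : aeval α (∑ j, c j • p j - q) = 0 := by simp [map_sum, h]
  have hmin :=
    natDegree_le_natDegree (minpoly.degree_le_of_ne_zero K α (sub_ne_zero.mpr hne) hroot)
  have := (natDegree_lt_iff_degree_lt (sub_ne_zero.mpr hne)).mpr (mem_degreeLT.mp hmem)
  omega

end Field

section Tower

variable {R K A : Type*} [CommRing R] [Field K] [Ring A] [Algebra R K] [Algebra K A] [Algebra R A]
  [IsScalarTower R K A] {α : A} {r : R} {x : A} {p : R[X]}

theorem eq_aeval_C_inv_mul_map (hr : algebraMap R K r ≠ 0)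
    (h : algebraMap R A r * x = aeval α p) :
    x = aeval α (C (algebraMap R K r)⁻¹ * p.map (algebraMap R K)) := by
  rw [map_mul, aeval_C, aeval_map_algebraMap, ← h, IsScalarTower.algebraMap_apply R K A,
    ← mul_assoc, ← map_mul, inv_mul_cancel₀ hr, map_one, one_mul]

theorem algebraMap_ne_zero_of_mul_eq_aeval {k : ℕ} (hp : IsMonicOfDegree p k)
    (hk : k < (minpoly K α).natDegree) (h : algebraMap R A r * x = aeval α p) :
    algebraMap R K r ≠ 0 := by
  intro hr
  have hroot : aeval α (p.map (algebraMap R K)) = 0 := by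
    rw [aeval_map_algebraMap, ← h, IsScalarTower.algebraMap_apply R K A, hr, map_zero, zero_mul]
  have hmin := natDegree_le_natDegree
    (minpoly.degree_le_of_ne_zero K α (hp.monic.map (algebraMap R K)).ne_zero hroot)
  rw [hp.monic.natDegree_map, hp.natDegree_eq] at hmin
  omega

theorem exists_degree_eq_aeval_of_mul_eq_aeval {k : ℕ} (hp : IsMonicOfDegree p k)
    (hk : k < (minpoly K α).natDegree) (h : algebraMap R A r * x = aeval α p) :
    ∃ P : K[X], P.degree = k ∧ x = aeval α P := by
  have hr := algebraMap_ne_zero_of_mul_eq_aeval hp hk h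
  refine ⟨_, ?_, eq_aeval_C_inv_mul_map hr h⟩
  rw [degree_C_mul (inv_ne_zero hr), degree_eq_natDegree (hp.monic.map _).ne_zero,
    hp.monic.natDegree_map, hp.natDegree_eq]

end Tower

end Polynomial

theorem normalised_integral_basis_replace_general
    (R F L : Type*) [CommRing R]
    [Field F] [Algebra R F] [IsFractionRing R F]
    [Field L] [Algebra F L] [FiniteDimensional F L]
    [Algebra R L] [IsScalarTower R F L]
    (n : ℕ) (hn : Module.finrank F L = n)
    (α : L)
    (hgen : Algebra.adjoin F {α} = ⊤)
    (d : ℕ → R) (f : ℕ → R[X])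
    (b : Module.Basis (Fin n) R (integralClosure R L))
    (hf : ∀ i, 1 ≤ i → i ≤ n - 1 → (f i).Monic ∧ (f i).natDegree = i)
    (hb : ∀ i : Fin n,
      ((i : ℕ) = 0 → ((b i : L) = 1)) ∧
      ((i : ℕ) ≠ 0 →
        algebraMap R L (d (i : ℕ)) * (b i : L) = aeval α (f (i : ℕ))))
    (i : Fin n) (hi : (i : ℕ) ≠ 0)
    (g : R[X]) (hgmonic : g.Monic) (hgdeg : g.natDegree = (i : ℕ))
    (s : integralClosure R L)
    (hs : algebraMap R L (d (i : ℕ)) * (s : L) = aeval α g) :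
    ∃ b' : Module.Basis (Fin n) R (integralClosure R L),
      ⇑b' = Function.update ⇑b i s := by
  have hminpoly : (minpoly F α).natDegree = n := by
    rw [← hn, (PowerBasis.ofAdjoinEqTop' (.of_finite F α) hgen).finrank]; rfl
  have hfj (j : Fin n) (hj : (j : ℕ) ≠ 0) : IsMonicOfDegree (f j) j :=
    let ⟨hmonic, hdeg⟩ := hf j (Nat.one_le_iff_ne_zero.mpr hj) (by omega); ⟨hdeg, hmonic⟩
  have hP (j : Fin n) : ∃ P : F[X], P.degree = (j : ℕ) ∧ (b j : L) = aeval α P := by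
    rcases eq_or_ne (j : ℕ) 0 with hj | hj
    · exact ⟨1, by rw [degree_one, hj]; rfl, by rw [(hb j).1 hj, map_one]⟩
    · exact exists_degree_eq_aeval_of_mul_eq_aeval (hfj j hj) (hminpoly ▸ j.isLt) ((hb j).2 hj)
  choose P hPdeg hPb using hP
  set t := s - b i
  have ht := eq_aeval_C_inv_mul_map (K := F)
    (algebraMap_ne_zero_of_mul_eq_aeval (hfj i hi) (hminpoly ▸ i.isLt) ((hb i).2 hi))
    (show algebraMap R L (d i) * (t : L) = aeval α (g - f i) by
      rw [Subalgebra.coe_sub, mul_sub, hs, (hb i).2 hi, map_sub])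
  have hq : (C (algebraMap R F (d i))⁻¹ * (g - f i).map (algebraMap R F)).natDegree < i :=
    ((natDegree_C_mul_le _ _).trans natDegree_map_le).trans_lt
      (IsMonicOfDegree.natDegree_sub_lt hi ⟨hgdeg, hgmonic⟩ (hfj i hi))
  have hrepr : ∑ j, algebraMap R F (b.repr t j) • aeval α (P j) = (t : L) := by
    simp_rw [← hPb, algebraMap_smul]
    exact_mod_cast congrArg Subtype.val (b.sum_repr t)
  have hti : b.repr t i = 0 := IsFractionRing.to_map_eq_zero_iff.mp <|
    eq_zero_of_sum_smul_aeval_eq_aeval hminpoly.ge hPdeg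
      (degree_le_natDegree.trans_lt (Nat.cast_lt.mpr hq)) (hrepr.trans ht) le_rfl
  refine b.exists_update_eq_of_isUnit_repr i ?_
  rw [← add_sub_cancel (b i) s, map_add, Finsupp.add_apply, hti, b.repr_self_apply, if_pos rfl,
    add_zero]
  exact isUnit_one

/-- If `{1, f₁(α)/d₁, …, f_{n-1}(α)/d_{n-1}}` is a normalised integral basis of `S` over `R`,
`1 ≤ i ≤ n-1`, and `g ∈ R[X]` is monic of degree `i` with `s = g(α)/dᵢ ∈ S`, then replacing
the `i`-th basis element `fᵢ(α)/dᵢ` by `g(α)/dᵢ` again gives an `R`-basis of `S`. -/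
theorem normalised_integral_basis_replace
    (R F L : Type*) [CommRing R] [IsDomain R] [IsPrincipalIdealRing R]
    [Field F] [Algebra R F] [IsFractionRing R F] [NumberField F]
    [Field L] [Algebra F L] [FiniteDimensional F L]
    [Algebra R L] [IsScalarTower R F L]
    (n : ℕ) (hn : Module.finrank F L = n)
    (α : L) (hαint : α ∈ integralClosure R L)
    (hgen : Algebra.adjoin F {α} = ⊤)
    (d : ℕ → R) (f : ℕ → R[X])
    (b : Module.Basis (Fin n) R (integralClosure R L))
    (hf : ∀ i, 1 ≤ i → i ≤ n - 1 → (f i).Monic ∧ (f i).natDegree = i)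
    (hb : ∀ i : Fin n,
      ((i : ℕ) = 0 → ((b i : L) = 1)) ∧
      ((i : ℕ) ≠ 0 →
        algebraMap R L (d (i : ℕ)) * (b i : L) = aeval α (f (i : ℕ))))
    (i : Fin n) (hi : (i : ℕ) ≠ 0)
    (g : R[X]) (hgmonic : g.Monic) (hgdeg : g.natDegree = (i : ℕ))
    (s : integralClosure R L)
    (hs : algebraMap R L (d (i : ℕ)) * (s : L) = aeval α g) :
    ∃ b' : Module.Basis (Fin n) R (integralClosure R L),
      ⇑b' = Function.update ⇑b i s :=
  normalised_integral_basis_replace_general R F L n hn α hgen d f b hf hb i hi g hgmonic hgdeg s hs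
end

section
/- If fh ≡ −1 (mod 4ℤ[i]), then {1, (i+γ)/2} is a ℤ[i]-module basis of O_M and the relative discriminant ideal of M/K is generated by fh. -/
/-!
Put `ω = (i + γ)/2` and `fh + 1 = 4c`. Then `ω² = iω + c`, so `ω` is integral, and the trace
form on `(1, ω)` has determinant `fh`. Conversely, if `x = a + bγ` is integral then so is its
conjugate `a - bγ`, so `u = 2a` and `a² - fh b²` lie in `ℤ[i]`; since `fh` is squarefree this
forces `v = 2b ∈ ℤ[i]`. Now `u² - fh v² ≡ 0 (mod 4)` and `fh ≡ -1` give `4 ∣ u² + v²`,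
which forces `u ≡ iv (mod 2)`, i.e. `x ∈ ℤ[i] + ℤ[i]ω`. Two bases of `O_M` have
discriminants that differ by the square of a unit.
-/

open Polynomial

section QuadraticExtension

variable {K M : Type*} [Field K] [Field M] [Algebra K M] {γ : M} {d : K}

theorem exists_eq_algebraMap_add_algebraMap_mul_of_sq_eq (hgen : Algebra.adjoin K {γ} = ⊤)
    (hγ : γ ^ 2 = algebraMap K M d) (x : M) :
    ∃ a b : K, x = algebraMap K M a + algebraMap K M b * γ := by
  have hx : x ∈ Algebra.adjoin K {γ} := hgen ▸ Algebra.mem_top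
  induction hx using Algebra.adjoin_induction with
  | mem x hx => exact ⟨0, 1, by rw [Set.mem_singleton_iff.mp hx]; simp⟩
  | algebraMap r => exact ⟨r, 0, by simp⟩
  | add x y _ _ hx hy =>
    obtain ⟨a, b, rfl⟩ := hx
    obtain ⟨a', b', rfl⟩ := hy
    exact ⟨a + a', b + b', by simp only [map_add]; ring⟩
  | mul x y _ _ hx hy =>
    obtain ⟨a, b, rfl⟩ := hx
    obtain ⟨a', b', rfl⟩ := hy
    refine ⟨a * a' + d * b * b', a * b' + b * a', ?_⟩
    simp only [map_add, map_mul]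
    linear_combination algebraMap K M b * algebraMap K M b' * hγ

variable [FiniteDimensional K M]

theorem minpoly_eq_X_sq_sub_C (hgen : Algebra.adjoin K {γ} = ⊤) (hdim : Module.finrank K M = 2)
    (hγ : γ ^ 2 = algebraMap K M d) : minpoly K γ = X ^ 2 - C d := by
  have hmonic : (X ^ 2 - C d).Monic := monic_X_pow_sub_C d two_ne_zero
  have hdvd : minpoly K γ ∣ X ^ 2 - C d := minpoly.dvd K γ (by simp [hγ])
  have hdeg : (minpoly K γ).natDegree = 2 := by
    rw [← PowerBasis.ofAdjoinEqTop_dim (IsIntegral.of_finite K γ) hgen, ← PowerBasis.finrank,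
      hdim]
  exact (eq_of_monic_of_dvd_of_natDegree_le (minpoly.monic (IsIntegral.of_finite K γ)) hmonic hdvd
    (by rw [hdeg, natDegree_X_pow_sub_C])).symm

theorem exists_algHom_apply_eq_neg (hgen : Algebra.adjoin K {γ} = ⊤)
    (hdim : Module.finrank K M = 2) (hγ : γ ^ 2 = algebraMap K M d) :
    ∃ σ : M →ₐ[K] M, σ γ = -γ := by
  let pb := PowerBasis.ofAdjoinEqTop (IsIntegral.of_finite K γ) hgen
  have hroot : aeval (-γ) (minpoly K pb.gen) = 0 := by
    simp [pb, minpoly_eq_X_sq_sub_C hgen hdim hγ, hγ]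
  exact ⟨pb.lift (-γ) hroot, pb.lift_gen (-γ) hroot⟩

theorem trace_eq_zero_of_sq_eq (hgen : Algebra.adjoin K {γ} = ⊤) (hdim : Module.finrank K M = 2)
    (hγ : γ ^ 2 = algebraMap K M d) : Algebra.trace K M γ = 0 := by
  have := (PowerBasis.ofAdjoinEqTop (IsIntegral.of_finite K γ) hgen).trace_gen_eq_nextCoeff_minpoly
  rw [PowerBasis.ofAdjoinEqTop_gen, minpoly_eq_X_sq_sub_C hgen hdim hγ] at this
  rw [this, nextCoeff_of_natDegree_pos (by rw [natDegree_X_pow_sub_C]; norm_num),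
    natDegree_X_pow_sub_C]
  simp [coeff_X_pow]

theorem discr_one_of_two_mul_eq_algebraMap_add (hdim : Module.finrank K M = 2) (h2 : (2 : K) ≠ 0)
    (hγ : γ ^ 2 = algebraMap K M d) (htr : Algebra.trace K M γ = 0) {ω : M} {t : K}
    (hω : 2 * ω = algebraMap K M t + γ) : Algebra.discr K ![1, ω] = d := by
  have tr : ∀ a b : K, Algebra.trace K M (algebraMap K M a + algebraMap K M b * γ) = 2 * a :=
    fun a b => by
      rw [map_add, ← Algebra.smul_def, map_smul, htr, smul_zero, add_zero,
        Algebra.trace_algebraMap, hdim, nsmul_eq_mul, Nat.cast_ofNat]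
  have tr1 : Algebra.trace K M 1 = 2 := by simpa using tr 1 0
  have h2M : (2 : M) ≠ 0 := by
    simpa only [map_ofNat, map_zero] using (algebraMap K M).injective.ne h2
  have h4 : (4 : K) ≠ 0 := by
    rw [show (4 : K) = 2 * 2 by norm_num]; exact mul_ne_zero h2 h2
  have h4M : (4 : M) ≠ 0 := by
    rw [show (4 : M) = 2 * 2 by norm_num]; exact mul_ne_zero h2M h2M
  have hω' : ω = algebraMap K M (t / 2) + algebraMap K M (1 / 2) * γ := by
    apply mul_left_cancel₀ h2M
    simp only [map_div₀, map_one, map_ofNat]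
    field_simp
    linear_combination hω
  have hω2 : ω ^ 2 = algebraMap K M ((t ^ 2 + d) / 4) + algebraMap K M (t / 2) * γ := by
    simp only [map_div₀, map_ofNat, map_add, map_pow]
    field_simp
    linear_combination 2 * ((2 * ω + algebraMap K M t + γ) * hω + hγ)
  rw [Algebra.discr_def, Matrix.det_fin_two]
  simp only [Algebra.traceMatrix_apply, Algebra.traceForm_apply, Matrix.cons_val_zero,
    Matrix.cons_val_one, one_mul, mul_one, ← pow_two, one_pow]
  rw [hω2, tr, hω', tr, tr1]
  field_simp
  ring

end QuadraticExtension

section IntegrallyClosed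

variable {R K : Type*} [CommRing R] [IsDomain R] [IsIntegrallyClosed R] [DecompositionMonoid R]
  [Field K] [Algebra R K] [IsFractionRing R K]

theorem exists_algebraMap_eq_of_squarefree_mul_sq_eq {d r : R} (hd : Squarefree d) {y : K}
    (h : algebraMap R K d * y ^ 2 = algebraMap R K r) : ∃ v : R, algebraMap R K v = y := by
  have hinj := IsFractionRing.injective R K
  obtain ⟨w, hw⟩ : ∃ w : R, algebraMap R K w = algebraMap R K d * y := by
    refine IsIntegrallyClosed.exists_algebraMap_eq_of_isIntegral_pow two_pos ?_
    rw [mul_pow, pow_two, mul_assoc, h, ← map_mul]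
    exact isIntegral_algebraMap
  obtain ⟨v, rfl⟩ : d ∣ w := (hd.dvd_pow_iff_dvd two_ne_zero).mp
    ⟨r, hinj (by rw [map_pow, hw, map_mul, ← h]; ring)⟩
  refine ⟨v, mul_left_cancel₀ ?_ (by rw [← map_mul, hw])⟩
  exact (map_ne_zero_iff _ hinj).mpr hd.ne_zero

variable {M : Type*} [Field M] [Algebra K M] [Algebra R M] [IsScalarTower R K M]
  [FiniteDimensional K M] {γ : M}

theorem exists_two_mul_eq_and_sq_sub_mul_sq_eq_of_isIntegral (hgen : Algebra.adjoin K {γ} = ⊤)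
    (hdim : Module.finrank K M = 2) {d : R} (hd : Squarefree d) (hγ : γ ^ 2 = algebraMap R M d)
    {x : M} (hx : IsIntegral R x) :
    ∃ u v N : R,
      2 * x = algebraMap R M u + algebraMap R M v * γ ∧ u ^ 2 - d * v ^ 2 = 4 * N := by
  have hinj := IsFractionRing.injective R K
  have hγK : γ ^ 2 = algebraMap K M (algebraMap R K d) := by
    rw [hγ, IsScalarTower.algebraMap_apply R K M]
  have mem : ∀ y : K, IsIntegral R (algebraMap K M y) → ∃ r : R, algebraMap R K r = y :=
    fun y hy => IsIntegrallyClosed.isIntegral_iff.mp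
      ((isIntegral_algebraMap_iff (algebraMap K M).injective).mp hy)
  obtain ⟨a, b, hab⟩ := exists_eq_algebraMap_add_algebraMap_mul_of_sq_eq hgen hγK x
  obtain ⟨σ, hσ⟩ := exists_algHom_apply_eq_neg hgen hdim hγK
  have hσx : σ x = algebraMap K M a - algebraMap K M b * γ := by
    simp only [hab, map_add, map_mul, AlgHom.commutes, hσ]; ring
  have hσx_int : IsIntegral R (σ x) := hx.map (σ.restrictScalars R)
  obtain ⟨u, hu⟩ := mem (2 * a) (by
    rw [show algebraMap K M (2 * a) = x + σ x by rw [hσx, hab, map_mul, map_ofNat]; ring]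
    exact hx.add hσx_int)
  obtain ⟨N, hN⟩ := mem (a ^ 2 - algebraMap R K d * b ^ 2) (by
    rw [show algebraMap K M (a ^ 2 - algebraMap R K d * b ^ 2) = x * σ x by
      rw [hσx, hab]
      simp only [map_sub, map_mul, map_pow]
      linear_combination algebraMap K M b ^ 2 * hγK]
    exact hx.mul hσx_int)
  obtain ⟨v, hv⟩ :=
    exists_algebraMap_eq_of_squarefree_mul_sq_eq (y := 2 * b) (r := u ^ 2 - 4 * N) hd
      (by rw [map_sub, map_pow, map_mul, hu, hN, map_ofNat]; ring)
  refine ⟨u, v, N, ?_, hinj ?_⟩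
  · simp only [hab, IsScalarTower.algebraMap_apply R K M, hu, hv, map_mul, map_ofNat]; ring
  · simp only [map_sub, map_mul, map_pow, map_ofNat, hu, hv, hN]; ring

end IntegrallyClosed


theorem exists_basis_integralClosure_of_forall_eq_add_smul {R M : Type*} [CommRing R] [CommRing M]
    [Algebra R M] {ω : M} (hω : IsIntegral R ω) (hli : LinearIndependent R ![1, ω])
    (hspan : ∀ x : M, IsIntegral R x → ∃ s t : R, x = algebraMap R M s + t • ω) :
    ∃ b : Module.Basis (Fin 2) R (integralClosure R M), (b 0 : M) = 1 ∧ (b 1 : M) = ω := by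
  let e : Fin 2 → integralClosure R M := ![1, ⟨ω, hω⟩]
  have he : (integralClosure R M).val ∘ e = ![1, ω] := by
    ext i; fin_cases i <;> rfl
  have hli' : LinearIndependent R e :=
    LinearIndependent.of_comp (integralClosure R M).val.toLinearMap (he ▸ hli)
  have hspan' : ⊤ ≤ Submodule.span R (Set.range e) := by
    rintro ⟨x, hx⟩ -
    obtain ⟨s, t, rfl⟩ := hspan x hx
    have : (⟨_, hx⟩ : integralClosure R M) = s • e 0 + t • e 1 := by
      ext; simp [e, Algebra.smul_def]
    rw [this]
    exact add_mem (Submodule.smul_mem _ _ (Submodule.subset_span ⟨0, rfl⟩))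
      (Submodule.smul_mem _ _ (Submodule.subset_span ⟨1, rfl⟩))
  exact ⟨Module.Basis.mk hli' hspan', by simp [e], by simp [e]⟩

section Discriminant

variable {R K M : Type*} [CommRing R] [Field K] [Algebra R K] [CommRing M] [Algebra K M]
  [Algebra R M] [IsScalarTower R K M] {ι : Type*} [Fintype ι] [DecidableEq ι]
  {A : Subalgebra R M}

theorem discr_coe_basis_eq (b b' : Module.Basis ι R A) :
    Algebra.discr K (fun i => (b i : M)) =
      algebraMap R K ((b'.toMatrix b).det ^ 2) * Algebra.discr K (fun i => (b' i : M)) := by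
  have hvec : (fun i => (b i : M)) =
      Matrix.vecMul (fun i => (b' i : M))
        (((b'.toMatrix b).map (algebraMap R K)).map (algebraMap K M)) := by
    ext i
    conv_lhs => rw [← b'.toMatrix_map_vecMul b]
    simp [Matrix.vecMul, dotProduct, ← IsScalarTower.algebraMap_apply]
  rw [hvec, Algebra.discr_of_matrix_vecMul, map_pow, RingHom.map_det]
  rfl

theorem span_singleton_eq_of_algebraMap_eq_discr (hinj : Function.Injective (algebraMap R K))
    (b b' : Module.Basis ι R A) {D D' : R}
    (hD : algebraMap R K D = Algebra.discr K (fun i => (b i : M)))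
    (hD' : algebraMap R K D' = Algebra.discr K (fun i => (b' i : M))) :
    Ideal.span {D} = Ideal.span {D'} := by
  have hunit : IsUnit (b'.toMatrix b).det := by
    rw [← LinearMap.toMatrix_id_eq_basis_toMatrix b b']
    exact LinearEquiv.isUnit_det (LinearEquiv.refl R A) b b'
  have hDD' : D = (b'.toMatrix b).det ^ 2 * D' :=
    hinj (by rw [map_mul, hD, hD', discr_coe_basis_eq b b'])
  rw [hDD', Ideal.span_singleton_mul_left_unit (hunit.pow 2)]

end Discriminant

namespace GaussianInt

theorem two_dvd_sub_sqrtd_mul_of_four_dvd {u v : GaussianInt} (h : 4 ∣ u ^ 2 + v ^ 2) :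
    2 ∣ u - Zsqrtd.sqrtd * v := by
  -- `u = a + bi`, `v = c + di`: the real and imaginary parts of `u² + v²` and of `u - iv`
  have mod4 : ∀ a b c d : ZMod 4,
      a ^ 2 - b ^ 2 + c ^ 2 - d ^ 2 = 0 → 2 * (a * b + c * d) = 0 →
      2 * (a + d) = 0 ∧ 2 * (b - c) = 0 := by
    decide
  have cast4 : ∀ x : ℤ, 4 ∣ x ↔ ((x : ZMod 4) = 0) := fun x => by
    simpa using (ZMod.intCast_zmod_eq_zero_iff_dvd x 4).symm
  rw [show (4 : GaussianInt) = ((4 : ℤ) : GaussianInt) by norm_num, Zsqrtd.intCast_dvd] at h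
  rw [show (2 : GaussianInt) = ((2 : ℤ) : GaussianInt) by norm_num, Zsqrtd.intCast_dvd]
  simp only [Zsqrtd.re_add, Zsqrtd.im_add, Zsqrtd.re_sub, Zsqrtd.im_sub, Zsqrtd.re_mul,
    Zsqrtd.im_mul, pow_two, Zsqrtd.re_sqrtd, Zsqrtd.im_sqrtd, cast4] at h ⊢
  push_cast at h
  obtain ⟨h₁, h₂⟩ :=
    mod4 u.re u.im v.re v.im (by linear_combination h.1) (by linear_combination h.2)
  have half : ∀ x : ℤ, 4 ∣ 2 * x → 2 ∣ x := fun x hx => by omega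
  exact ⟨half _ ((cast4 _).2 (by push_cast; linear_combination h₁)),
    half _ ((cast4 _).2 (by push_cast; linear_combination h₂))⟩

theorem isIntegral_of_two_mul_eq {M : Type*} [Field M] [Algebra GaussianInt M]
    (h2 : (2 : M) ≠ 0) {d : GaussianInt} {γ ω : M} (hγ : γ ^ 2 = algebraMap GaussianInt M d)
    (hd : 4 ∣ d + 1) (hω : 2 * ω = algebraMap GaussianInt M Zsqrtd.sqrtd + γ) :
    IsIntegral GaussianInt ω := by
  obtain ⟨c, hc⟩ := hd
  set I := algebraMap GaussianInt M Zsqrtd.sqrtd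
  have hI : I ^ 2 = -1 := by
    rw [← map_pow, show (Zsqrtd.sqrtd : GaussianInt) ^ 2 = -1 by decide, map_neg, map_one]
  have hcM : algebraMap GaussianInt M d + 1 = 4 * algebraMap GaussianInt M c := by
    have := congrArg (algebraMap GaussianInt M) hc
    rwa [map_add, map_one, map_mul, map_ofNat] at this
  have hω2 : ω ^ 2 = I * ω + algebraMap GaussianInt M c := by
    have h4 : (4 : M) ≠ 0 := by
      rw [show (4 : M) = 2 * 2 by norm_num]; exact mul_ne_zero h2 h2
    apply mul_left_cancel₀ h4
    linear_combination (2 * ω - I + γ) * hω + hγ - hI + hcM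
  refine ⟨X ^ 2 - (C Zsqrtd.sqrtd * X + C c), monic_X_pow_sub degree_linear_lt, ?_⟩
  simp [hω2, I]

theorem exists_eq_add_smul_of_isIntegral {K M : Type*} [Field K] [Algebra GaussianInt K]
    [IsFractionRing GaussianInt K] [Field M] [Algebra K M] [Algebra GaussianInt M]
    [IsScalarTower GaussianInt K M] [FiniteDimensional K M] (h2 : (2 : M) ≠ 0) {d : GaussianInt}
    {γ ω : M} (hgen : Algebra.adjoin K {γ} = ⊤) (hdim : Module.finrank K M = 2)
    (hsq : Squarefree d) (hγ : γ ^ 2 = algebraMap GaussianInt M d) (hd : 4 ∣ d + 1)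
    (hω : 2 * ω = algebraMap GaussianInt M Zsqrtd.sqrtd + γ) {x : M}
    (hx : IsIntegral GaussianInt x) :
    ∃ s t : GaussianInt, x = algebraMap GaussianInt M s + t • ω := by
  obtain ⟨u, v, N, hx2, huv⟩ :=
    exists_two_mul_eq_and_sq_sub_mul_sq_eq_of_isIntegral hgen hdim hsq hγ hx
  obtain ⟨c, hc⟩ := hd
  obtain ⟨s, hs⟩ := two_dvd_sub_sqrtd_mul_of_four_dvd (u := u) (v := v)
    ⟨N + c * v ^ 2, by linear_combination huv + v ^ 2 * hc⟩
  refine ⟨s, v, mul_left_cancel₀ h2 ?_⟩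
  rw [hx2, Algebra.smul_def, show u = 2 * s + Zsqrtd.sqrtd * v by linear_combination hs]
  simp only [map_add, map_mul, map_ofNat]
  linear_combination -algebraMap GaussianInt M v * hω

end GaussianInt

/-- If `fh ≡ -1 (mod 4ℤ[i])`, then `{1, (i+γ)/2}` is a `ℤ[i]`-basis of `O_M` and the relative discriminant ideal of `M/K` is generated by `fh`. -/
theorem quadratic_basis_of_fh_cong_neg_one
    (f h : GaussianInt) (hf : Squarefree f) (hh : Squarefree h) (hfh : IsCoprime f h)
    (K M : Type*) [Field K] [Field M]
    [Algebra GaussianInt K] [IsFractionRing GaussianInt K]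
    [Algebra K M] [Algebra GaussianInt M] [IsScalarTower GaussianInt K M]
    [FiniteDimensional K M] (hdim : Module.finrank K M = 2)
    (γ : M) (hγ : γ ^ 2 = algebraMap GaussianInt M (f * h))
    (hgen : Algebra.adjoin K {γ} = ⊤)
    (hcong : (4 : GaussianInt) ∣ (f * h + 1)) :
    (∃ b : Module.Basis (Fin 2) GaussianInt (integralClosure GaussianInt M),
      (b 0 : M) = 1 ∧ algebraMap GaussianInt M 2 * (b 1 : M) = algebraMap GaussianInt M Zsqrtd.sqrtd + γ) ∧
    (∀ (b : Module.Basis (Fin 2) GaussianInt (integralClosure GaussianInt M))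
        (D : GaussianInt),
        algebraMap GaussianInt K D = Algebra.discr K (fun i : Fin 2 => (b i : M)) →
        Ideal.span {D} = Ideal.span {(f * h : GaussianInt)}) := by
  have hinj := IsFractionRing.injective GaussianInt K
  have : CharZero K := charZero_of_injective_algebraMap hinj
  have : CharZero M := charZero_of_injective_algebraMap (algebraMap K M).injective
  have hsq : Squarefree (f * h) := squarefree_mul_iff.mpr ⟨hfh.isRelPrime, hf, hh⟩
  have hγK : γ ^ 2 = algebraMap K M (algebraMap GaussianInt K (f * h)) := by
    rw [hγ, IsScalarTower.algebraMap_apply GaussianInt K M]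
  obtain ⟨ω, hω⟩ : ∃ ω : M, 2 * ω = algebraMap GaussianInt M Zsqrtd.sqrtd + γ :=
    ⟨2⁻¹ * _, mul_inv_cancel_left₀ two_ne_zero _⟩
  have hdiscr : Algebra.discr K ![1, ω] = algebraMap GaussianInt K (f * h) :=
    discr_one_of_two_mul_eq_algebraMap_add hdim two_ne_zero hγK
      (trace_eq_zero_of_sq_eq hgen hdim hγK)
      (by rwa [IsScalarTower.algebraMap_apply GaussianInt K M] at hω)
  have hli : LinearIndependent K ![1, ω] := by
    by_contra hdep
    rw [Algebra.discr_zero_of_not_linearIndependent K hdep, eq_comm,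
      map_eq_zero_iff _ hinj] at hdiscr
    exact hsq.ne_zero hdiscr
  obtain ⟨b, hb0, hb1⟩ := exists_basis_integralClosure_of_forall_eq_add_smul
    (GaussianInt.isIntegral_of_two_mul_eq two_ne_zero hγ hcong hω)
    (hli.restrict_scalars' (R := GaussianInt))
    (fun _ ↦ GaussianInt.exists_eq_add_smul_of_isIntegral two_ne_zero hgen hdim hsq hγ hcong hω)
  refine ⟨⟨b, hb0, by rw [hb1, map_ofNat, hω]⟩, fun b' D hD => ?_⟩
  refine span_singleton_eq_of_algebraMap_eq_discr hinj b' b hD ?_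
  rw [← hdiscr]
  congr
  ext i
  fin_cases i <;> simp [hb0, hb1]
end

section
/- Let {1, (a₀+α)/d₁, (b₀+b₁α+α²)/d₂, (c₀+c₁α+c₂α²+α³)/d₃} be a normalised integral basis of O_N over ℤ[i]. Then no prime π of ℤ[i] coprime to 1+i divides d₁; moreover, if (1+i) does not divide h, then (1+i)² does not divide d₁. -/
/-!
The element `θ = (a₀ + α) / d₁` is a root of `q = (d₁ X - a₀) ^ 4 - m`, and `θ` generates `N / K`,
so its minimal polynomial has degree `4 = deg q`. Over the integrally closed ring `ℤ[i]` this
minimal polynomial has integral coefficients, hence `q` is `d₁ ^ 4` times it and `d₁ ^ 4` divides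
every coefficient of `q`: `d₁ ^ 3 ∣ 4 a₀ ^ 3` and `d₁ ^ 4 ∣ a₀ ^ 4 - m`. A prime dividing both `a₀`
and `d₁` would then satisfy `π ^ 4 ∣ m`, which is impossible since `m = f g² h³` with `f, g, h`
squarefree and pairwise coprime. An odd prime dividing `d₁` divides `4 a₀ ^ 3`, hence `a₀`; and
`(1 + i) ^ 2 ∣ d₁` gives `(1 + i) ^ 6 ∣ 4 a₀ ^ 3 = -(1 + i) ^ 4 a₀ ^ 3`, hence `1 + i ∣ a₀`.
-/

open Polynomial Module

theorem Zsqrtd.irreducible_of_natAbs_norm_prime {d : ℤ} {z : Zsqrtd d}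
    (hz : z.norm.natAbs.Prime) : Irreducible z where
  not_isUnit hu := hz.ne_one (Zsqrtd.norm_eq_one_iff.mpr hu)
  isUnit_or_isUnit a b hab := by
    rw [hab, Zsqrtd.norm_mul, Int.natAbs_mul, Nat.prime_mul_iff] at hz
    rcases hz with ⟨-, hb⟩ | ⟨-, ha⟩
    · exact Or.inr (Zsqrtd.norm_eq_one_iff.mp hb)
    · exact Or.inl (Zsqrtd.norm_eq_one_iff.mp ha)

theorem GaussianInt.prime_one_add_sqrtd : Prime (1 + Zsqrtd.sqrtd : GaussianInt) :=
  (Zsqrtd.irreducible_of_natAbs_norm_prime (by decide)).prime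

theorem GaussianInt.four_eq_neg_one_add_sqrtd_pow_four :
    (4 : GaussianInt) = -(1 + Zsqrtd.sqrtd) ^ 4 := by
  decide

theorem Prime.dvd_of_pow_succ_dvd_pow_mul_of_squarefree {M : Type*} [CommMonoidWithZero M]
    [IsCancelMulZero M] {p x y : M} (hp : Prime p) (hx : Squarefree x) {n : ℕ}
    (h : p ^ (n + 1) ∣ x ^ n * y) : p ∣ y := by
  by_cases hpx : p ∣ x
  · obtain ⟨x', rfl⟩ := hpx
    have hpx' : ¬ p ∣ x' := fun hd ↦ hp.not_isUnit (hx p (mul_dvd_mul_left p hd))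
    rw [mul_pow, mul_assoc, pow_succ] at h
    have hp' := (mul_dvd_mul_iff_left (pow_ne_zero n hp.ne_zero)).mp h
    exact (hp.dvd_or_dvd hp').resolve_left fun h' ↦ hpx' (hp.dvd_of_dvd_pow h')
  · have hp' := (dvd_pow_self p n.succ_ne_zero).trans h
    exact (hp.dvd_or_dvd hp').resolve_left fun h' ↦ hpx (hp.dvd_of_dvd_pow h')

theorem Prime.not_pow_four_dvd_mul_sq_mul_pow_three {R : Type*} [CommRing R] [IsDomain R]
    {p f g h : R}
    (hp : Prime p) (hf : Squarefree f) (hg : Squarefree g) (hh : Squarefree h)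
    (hfg : IsCoprime f g) (hfh : IsCoprime f h) (hgh : IsCoprime g h) :
    ¬ p ^ 4 ∣ f * g ^ 2 * h ^ 3 := by
  have coprime_absurd {x y : R} (hxy : IsCoprime x y) (hx : p ∣ x) {k : ℕ} (hy : p ∣ y ^ k) :
      False :=
    hp.not_isUnit (hxy.isUnit_of_dvd' hx (hp.dvd_of_dvd_pow hy))
  intro hdvd
  have hpow (n : ℕ) (hn : n ≤ 3) : p ^ (n + 1) ∣ f * g ^ 2 * h ^ 3 :=
    (pow_dvd_pow p (by omega)).trans hdvd
  rcases hp.dvd_or_dvd (by simpa using hpow 0 (by norm_num)) with hpfg | hph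
  · rcases hp.dvd_or_dvd hpfg with hpf | hpg2
    · have hp' := hp.dvd_of_pow_succ_dvd_pow_mul_of_squarefree hf (n := 1)
        (by simpa only [pow_one, mul_assoc] using hpow 1 (by norm_num))
      rcases hp.dvd_or_dvd hp' with hg' | hh'
      exacts [coprime_absurd hfg hpf hg', coprime_absurd hfh hpf hh']
    · have hpg := hp.dvd_of_dvd_pow hpg2
      have hp' := hp.dvd_of_pow_succ_dvd_pow_mul_of_squarefree hg (n := 2) (y := f * h ^ 3)
        (by convert hpow 2 (by norm_num) using 1; ring)
      rcases hp.dvd_or_dvd hp' with hf' | hh'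
      exacts [coprime_absurd hfg.symm hpg (pow_one f ▸ hf'), coprime_absurd hgh hpg hh']
  · have hp' := hp.dvd_of_pow_succ_dvd_pow_mul_of_squarefree hh (n := 3) (y := f * g ^ 2)
      (by convert hpow 3 le_rfl using 1; ring)
    rcases hp.dvd_or_dvd hp' with hf' | hg'
    exacts [coprime_absurd hfh.symm (hp.dvd_of_dvd_pow hph) (pow_one f ▸ hf'),
      coprime_absurd hgh.symm (hp.dvd_of_dvd_pow hph) hg']

theorem Polynomial.coeff_natDegree_minpoly_dvd_coeff {R S : Type*} [CommRing R] [IsDomain R]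
    [IsIntegrallyClosed R] [CommRing S] [IsDomain S] [Algebra R S] [IsTorsionFree R S]
    {s : S} (hs : IsIntegral R s) {q : R[X]} (hq : aeval s q = 0)
    (hdeg : q.natDegree ≤ (minpoly R s).natDegree) (k : ℕ) :
    q.coeff (minpoly R s).natDegree ∣ q.coeff k := by
  obtain ⟨r, rfl⟩ := minpoly.isIntegrallyClosed_dvd hs hq
  have hr : r.natDegree = 0 := by
    rcases eq_or_ne r 0 with rfl | hr0
    · rfl
    rw [natDegree_mul (minpoly.ne_zero hs) hr0] at hdeg
    omega
  rw [eq_C_of_natDegree_eq_zero hr, coeff_mul_C, coeff_mul_C, (minpoly.monic hs).coeff_natDegree,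
    one_mul]
  exact dvd_mul_left _ _

theorem natDegree_minpoly_eq_finrank_of_adjoin_eq_top {K N : Type*} [Field K] [Field N]
    [Algebra K N] [FiniteDimensional K N] {x : N} (hx : Algebra.adjoin K {x} = ⊤) :
    (minpoly K x).natDegree = finrank K N :=
  (Field.primitive_element_iff_minpoly_natDegree_eq K x).mp
    (IntermediateField.adjoin_eq_top_of_algebra K {x} hx)

section QuarticKummer

variable {R K N : Type*} [CommRing R] [IsDomain R] [IsIntegrallyClosed R] [Field K]
  [Algebra R K] [IsFractionRing R K] [Field N] [Algebra K N] [Algebra R N]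
  [IsScalarTower R K N] [FiniteDimensional K N]

theorem dvd_of_isIntegral_of_mul_eq_add_quartic_root (hdim : finrank K N = 4) {α : N} {m : R}
    (hα : α ^ 4 = algebraMap R N m) (hgen : Algebra.adjoin K {α} = ⊤) {a d : R} {θ : N}
    (hθ : IsIntegral R θ) (hdθ : algebraMap R N d * θ = algebraMap R N a + α) :
    d ^ 3 ∣ 4 * a ^ 3 ∧ d ^ 4 ∣ a ^ 4 - m := by
  have : IsTorsionFree R N := .trans_faithfulSMul R K N
  have hα_eq : α = algebraMap K N (algebraMap R K d) * θ - algebraMap K N (algebraMap R K a) := by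
    simp only [← IsScalarTower.algebraMap_apply]
    linear_combination -hdθ
  have hd : d ≠ 0 := by
    rintro rfl
    have h := natDegree_minpoly_eq_finrank_of_adjoin_eq_top hgen
    rw [hα_eq, map_zero, map_zero, zero_mul, zero_sub, ← map_neg, minpoly.eq_X_sub_C,
      natDegree_X_sub_C, hdim] at h
    omega
  have hθ_gen : Algebra.adjoin K {θ} = ⊤ := by
    refine eq_top_iff.mpr (hgen ▸ Algebra.adjoin_le (Set.singleton_subset_iff.mpr ?_))
    rw [SetLike.mem_coe, hα_eq]
    exact sub_mem (mul_mem (Subalgebra.algebraMap_mem _ _)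
      (Algebra.self_mem_adjoin_singleton K θ)) (Subalgebra.algebraMap_mem _ _)
  have hθ_deg : (minpoly R θ).natDegree = 4 := by
    rw [← hdim, ← natDegree_minpoly_eq_finrank_of_adjoin_eq_top hθ_gen,
      minpoly.isIntegrallyClosed_eq_field_fractions' K hθ,
      (minpoly.monic hθ).natDegree_map]
  -- `q = (d X - a) ^ 4 - m`, expanded
  set q : R[X] := C (d ^ 4) * X ^ 4 - C (4 * d ^ 3 * a) * X ^ 3 + C (6 * d ^ 2 * a ^ 2) * X ^ 2 -
    C (4 * d * a ^ 3) * X + C (a ^ 4 - m) with hq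
  have hqθ : aeval θ q = 0 := by
    have h : (algebraMap R N d * θ - algebraMap R N a) ^ 4 = algebraMap R N m := by
      rw [← hα, hdθ, add_sub_cancel_left]
    simp only [hq, map_add, map_sub, map_mul, map_pow, aeval_C, aeval_X, map_ofNat]
    linear_combination h
  have hq_deg : q.natDegree ≤ (minpoly R θ).natDegree := by
    rw [hθ_deg, hq]
    compute_degree
  have hdvd := Polynomial.coeff_natDegree_minpoly_dvd_coeff hθ hqθ hq_deg
  rw [hθ_deg] at hdvd
  have h1 := hdvd 1
  have h0 := hdvd 0
  simp only [hq, coeff_add, coeff_sub, coeff_C_mul, coeff_X_pow, coeff_X, coeff_C] at h1 h0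
  norm_num at h1 h0
  refine ⟨(mul_dvd_mul_iff_left hd).mp ?_, h0⟩
  convert h1 using 1 <;> ring

end QuarticKummer

theorem quartic_kummer_d1_odd_part_trivial_general
    (f g h : GaussianInt) (hf : Squarefree f) (hg : Squarefree g) (hh : Squarefree h)
    (hfg : IsCoprime f g) (hfh : IsCoprime f h) (hgh : IsCoprime g h)
    (K N : Type*) [Field K] [Field N]
    [Algebra GaussianInt K] [IsFractionRing GaussianInt K]
    [Algebra K N] [Algebra GaussianInt N] [IsScalarTower GaussianInt K N]
    [FiniteDimensional K N] (hdim : Module.finrank K N = 4)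
    (α : N) (hα : α ^ 4 = algebraMap GaussianInt N (f * g ^ 2 * h ^ 3))
    (hgen : Algebra.adjoin K {α} = ⊤)
    (a₀ d₁ : GaussianInt)
    (bN : Module.Basis (Fin 4) GaussianInt (integralClosure GaussianInt N))
    (hb1 : algebraMap GaussianInt N d₁ * (bN 1 : N) = algebraMap GaussianInt N a₀ + α) :
    (∀ π : GaussianInt, Prime π → IsCoprime π (1 + Zsqrtd.sqrtd) → ¬ π ∣ d₁) ∧
    (¬ (1 + Zsqrtd.sqrtd : GaussianInt) ∣ h →
      ¬ (1 + Zsqrtd.sqrtd : GaussianInt) ^ 2 ∣ d₁) := by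
  obtain ⟨hcoeff₁, hcoeff₀⟩ :=
    dvd_of_isIntegral_of_mul_eq_add_quartic_root hdim hα hgen (bN 1).2 hb1
  have not_dvd_d₁_of_dvd_a₀ (π : GaussianInt) (hπ : Prime π) (ha : π ∣ a₀) : ¬ π ∣ d₁ := fun hd ↦ by
    refine hπ.not_pow_four_dvd_mul_sq_mul_pow_three hf hg hh hfg hfh hgh ?_
    simpa using dvd_sub (pow_dvd_pow_of_dvd ha 4) ((pow_dvd_pow_of_dvd hd 4).trans hcoeff₀)
  set ϖ : GaussianInt := 1 + Zsqrtd.sqrtd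
  have hϖ : Prime ϖ := GaussianInt.prime_one_add_sqrtd
  refine ⟨fun π hπ hcop hd ↦ not_dvd_d₁_of_dvd_a₀ π hπ ?_ hd, fun _ hd ↦ ?_⟩
  · have h4 : IsCoprime π 4 := by
      rw [GaussianInt.four_eq_neg_one_add_sqrtd_pow_four]
      exact hcop.pow_right.neg_right
    exact hπ.dvd_of_dvd_pow (h4.dvd_of_dvd_mul_left
      (((dvd_pow_self π three_ne_zero).trans (pow_dvd_pow_of_dvd hd 3)).trans hcoeff₁))
  · refine not_dvd_d₁_of_dvd_a₀ ϖ hϖ ?_ ((dvd_pow_self ϖ two_ne_zero).trans hd)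
    have h : ϖ ^ 4 * ϖ ^ 2 ∣ ϖ ^ 4 * a₀ ^ 3 := by
      have h6 : ϖ ^ 6 ∣ 4 * a₀ ^ 3 := by
        simpa [← pow_mul] using (pow_dvd_pow_of_dvd hd 3).trans hcoeff₁
      rw [GaussianInt.four_eq_neg_one_add_sqrtd_pow_four, neg_mul, dvd_neg] at h6
      rwa [← pow_add]
    exact hϖ.dvd_of_dvd_pow ((dvd_pow_self ϖ two_ne_zero).trans
      ((mul_dvd_mul_iff_left (pow_ne_zero 4 hϖ.ne_zero)).mp h))

/-- Let `{1, (a₀+α)/d₁, (b₀+b₁α+α²)/d₂, (c₀+c₁α+c₂α²+α³)/d₃}` be a normalised integral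
basis of `O_N` over `ℤ[i]`.  Then no prime `π` of `ℤ[i]` coprime to `1+i` divides `d₁`;
moreover, if `(1+i) ∤ h`, then `(1+i)² ∤ d₁`. -/
theorem quartic_kummer_d1_odd_part_trivial
    (f g h : GaussianInt) (hf : Squarefree f) (hg : Squarefree g) (hh : Squarefree h)
    (hfg : IsCoprime f g) (hfh : IsCoprime f h) (hgh : IsCoprime g h)
    (K N : Type*) [Field K] [Field N]
    [Algebra GaussianInt K] [IsFractionRing GaussianInt K]
    [Algebra K N] [Algebra GaussianInt N] [IsScalarTower GaussianInt K N]
    [FiniteDimensional K N] (hdim : Module.finrank K N = 4)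
    (α : N) (hα : α ^ 4 = algebraMap GaussianInt N (f * g ^ 2 * h ^ 3))
    (hgen : Algebra.adjoin K {α} = ⊤)
    (a₀ b₀ b₁ c₀ c₁ c₂ d₁ d₂ d₃ : GaussianInt)
    (bN : Module.Basis (Fin 4) GaussianInt (integralClosure GaussianInt N))
    (hb0 : (bN 0 : N) = 1)
    (hb1 : algebraMap GaussianInt N d₁ * (bN 1 : N) = algebraMap GaussianInt N a₀ + α)
    (hb2 : algebraMap GaussianInt N d₂ * (bN 2 : N) =
      algebraMap GaussianInt N b₀ + algebraMap GaussianInt N b₁ * α + α ^ 2)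
    (hb3 : algebraMap GaussianInt N d₃ * (bN 3 : N) =
      algebraMap GaussianInt N c₀ + algebraMap GaussianInt N c₁ * α +
        algebraMap GaussianInt N c₂ * α ^ 2 + α ^ 3) :
    (∀ π : GaussianInt, Prime π → IsCoprime π (1 + Zsqrtd.sqrtd) → ¬ π ∣ d₁) ∧
    (¬ (1 + Zsqrtd.sqrtd : GaussianInt) ∣ h →
      ¬ (1 + Zsqrtd.sqrtd : GaussianInt) ^ 2 ∣ d₁) :=
  quartic_kummer_d1_odd_part_trivial_general f g h hf hg hh hfg hfh hgh K N hdim α hα hgen a₀ d₁ bN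
    hb1
end

section
/- If π is a prime element of ℤ[i] dividing f, g, or h, then the prime ideal (π) of ℤ[i] is ramified in the extension N/K, i.e. some prime ideal of O_N lying over (π) has ramification index greater than 1. -/
/-!
Write `f g² h³ = πᵛ u` with `π ∤ u`; as `f, g, h` are squarefree and pairwise coprime,
`v ∈ {1, 2, 3}`. If `Q` is a prime of `O_N` over `(π)` with ramification index `e`, comparing
the `Q`-adic valuations of the ideal identity `(α)⁴ = (π)ᵛ (u)` gives `4 v_Q(α) = v e`, so `e = 1`
would force `4 ∣ v`.
-/

open UniqueFactorizationMonoid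

theorem UniqueFactorizationMonoid.dvd_mul_count_normalizedFactors_of_pow_eq_pow_mul
    {α : Type*} [CommMonoidWithZero α] [NormalizationMonoid α]
    [UniqueFactorizationMonoid α] [DecidableEq α]
    {x y z q : α} {n v : ℕ} (hy : y ≠ 0) (hz : z ≠ 0) (hqz : ¬ q ∣ z)
    (h : x ^ n = y ^ v * z) :
    n ∣ v * (normalizedFactors y).count q := by
  have hcount := congrArg (fun w ↦ (normalizedFactors w).count q) h
  have hz' : (normalizedFactors z).count q = 0 :=
    Multiset.count_eq_zero.mpr fun hq ↦ hqz (dvd_of_mem_normalizedFactors hq)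
  simp only [normalizedFactors_pow, normalizedFactors_mul (pow_ne_zero v hy) hz,
    Multiset.count_add, Multiset.count_nsmul, hz', add_zero] at hcount
  exact ⟨_, hcount.symm⟩

namespace Ideal

variable {R S : Type*} [CommRing R] [CommRing S] [Algebra R S] [IsDedekindDomain S]

theorem one_lt_ramificationIdx'_of_pow_eq_pow_mul {π u : R} {a : S} {Q : Ideal S}
    [Q.IsPrime] {n v : ℕ} (hQ : Q.comap (algebraMap R S) = span {π})
    (hπ : algebraMap R S π ≠ 0) (hu : u ∉ span {π}) (hn : ¬ n ∣ v)
    (ha : a ^ n = algebraMap R S (π ^ v * u)) :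
    1 < ramificationIdx' (span {π}) Q := by
  classical
  have hmap : map (algebraMap R S) (span {π}) = span {algebraMap R S π} := by
    rw [map_span, Set.image_singleton]
  have hmap0 : map (algebraMap R S) (span {π}) ≠ ⊥ := by
    simpa [hmap] using hπ
  have hle : map (algebraMap R S) (span {π}) ≤ Q := map_le_iff_le_comap.mpr hQ.ge
  have hQ0 : Q ≠ ⊥ := by rintro rfl; exact hmap0 (le_bot_iff.mp hle)
  have huQ : ¬ Q ∣ span {algebraMap R S u} := by
    rw [dvd_iff_le, span_singleton_le_iff_mem, ← mem_comap, hQ]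
    exact hu
  have hu0 : algebraMap R S u ≠ 0 := by
    rintro h0
    exact huQ (by simp [h0])
  have hdvd : n ∣ v * ramificationIdx' (span {π}) Q := by
    rw [IsDedekindDomain.ramificationIdx'_eq_normalizedFactors_count hmap0 ‹_› hQ0, hmap]
    refine dvd_mul_count_normalizedFactors_of_pow_eq_pow_mul (x := span {a}) ?_ ?_ huQ ?_
    · simpa using hπ
    · simpa using hu0
    · rw [span_singleton_pow, span_singleton_pow, span_singleton_mul_span_singleton, ha,
        map_mul, map_pow]
  have he0 := IsDedekindDomain.ramificationIdx'_ne_zero hmap0 ‹_› hle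
  by_contra! he
  obtain he1 : ramificationIdx' (span {π}) Q = 1 := by omega
  exact hn (by simpa [he1] using hdvd)

end Ideal

theorem Prime.exists_eq_mul_not_dvd_of_squarefree {R : Type*} [CommMonoidWithZero R]
    {π f : R} (hπ : Prime π) (hf : Squarefree f) (hd : π ∣ f) :
    ∃ f₁, f = π * f₁ ∧ ¬ π ∣ f₁ := by
  obtain ⟨f₁, rfl⟩ := hd
  exact ⟨f₁, rfl, fun h ↦ hπ.not_isUnit (hf π (mul_dvd_mul_left π h))⟩

theorem Prime.not_dvd_of_isCoprime {R : Type*} [CommSemiring R] {π a b : R} (hπ : Prime π)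
    (hab : IsCoprime a b) (ha : π ∣ a) : ¬ π ∣ b :=
  fun hb ↦ hπ.not_isUnit (hab.isUnit_of_dvd' ha hb)

theorem Prime.not_dvd_mul_sq_mul_pow_three {R : Type*} [CommMonoidWithZero R] {π x y z : R}
    (hπ : Prime π) (hx : ¬ π ∣ x) (hy : ¬ π ∣ y) (hz : ¬ π ∣ z) :
    ¬ π ∣ x * y ^ 2 * z ^ 3 := by
  simp only [hπ.dvd_mul, not_or]
  exact ⟨⟨hx, fun h ↦ hy (hπ.dvd_of_dvd_pow h)⟩, fun h ↦ hz (hπ.dvd_of_dvd_pow h)⟩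

theorem Prime.exists_mul_sq_mul_pow_three_eq_pow_mul {R : Type*} [CommSemiring R] {π f g h : R}
    (hπ : Prime π) (hf : Squarefree f) (hg : Squarefree g) (hh : Squarefree h)
    (hfg : IsCoprime f g) (hfh : IsCoprime f h) (hgh : IsCoprime g h)
    (hdvd : π ∣ f ∨ π ∣ g ∨ π ∣ h) :
    ∃ v u, f * g ^ 2 * h ^ 3 = π ^ v * u ∧ ¬ π ∣ u ∧ 0 < v ∧ v < 4 := by
  rcases hdvd with hd | hd | hd
  · obtain ⟨f₁, rfl, hf₁⟩ := hπ.exists_eq_mul_not_dvd_of_squarefree hf hd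
    refine ⟨1, f₁ * g ^ 2 * h ^ 3, by ring, hπ.not_dvd_mul_sq_mul_pow_three hf₁
      (hπ.not_dvd_of_isCoprime hfg hd) (hπ.not_dvd_of_isCoprime hfh hd), by norm_num⟩
  · obtain ⟨g₁, rfl, hg₁⟩ := hπ.exists_eq_mul_not_dvd_of_squarefree hg hd
    refine ⟨2, f * g₁ ^ 2 * h ^ 3, by ring, hπ.not_dvd_mul_sq_mul_pow_three
      (hπ.not_dvd_of_isCoprime hfg.symm hd) hg₁ (hπ.not_dvd_of_isCoprime hgh hd), by norm_num⟩
  · obtain ⟨h₁, rfl, hh₁⟩ := hπ.exists_eq_mul_not_dvd_of_squarefree hh hd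
    refine ⟨3, f * g ^ 2 * h₁ ^ 3, by ring, hπ.not_dvd_mul_sq_mul_pow_three
      (hπ.not_dvd_of_isCoprime hfh.symm hd) (hπ.not_dvd_of_isCoprime hgh.symm hd) hh₁,
      by norm_num⟩

theorem quartic_kummer_ramified_of_dvd_general
    (f g h : GaussianInt) (hf : Squarefree f) (hg : Squarefree g) (hh : Squarefree h)
    (hfg : IsCoprime f g) (hfh : IsCoprime f h) (hgh : IsCoprime g h)
    (K N : Type*) [Field K] [Field N]
    [Algebra GaussianInt K] [IsFractionRing GaussianInt K]
    [Algebra K N] [Algebra GaussianInt N] [IsScalarTower GaussianInt K N]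
    [FiniteDimensional K N]
    (α : N) (hα : α ^ 4 = algebraMap GaussianInt N (f * g ^ 2 * h ^ 3))
    (π : GaussianInt) (hπ : Prime π) (hdvd : π ∣ f ∨ π ∣ g ∨ π ∣ h) :
    ∃ Q : Ideal (integralClosure GaussianInt N),
      Q.IsPrime ∧
      Q.comap (algebraMap GaussianInt (integralClosure GaussianInt N)) =
        Ideal.span {π} ∧
      1 < Ideal.ramificationIdx'
        (Ideal.span {π}) Q := by
  set B := integralClosure GaussianInt N
  have : CharZero K := charZero_of_injective_algebraMap (IsFractionRing.injective GaussianInt K)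
  have : IsDedekindDomain B := integralClosure.isDedekindDomain GaussianInt K N
  have : FaithfulSMul GaussianInt B := FaithfulSMul.of_field_isFractionRing GaussianInt B K N
  have : (Ideal.span {π}).IsPrime := (Ideal.span_singleton_prime hπ.ne_zero).mpr hπ
  obtain ⟨v, u, hm, hu, hv0, hv4⟩ :=
    hπ.exists_mul_sq_mul_pow_three_eq_pow_mul hf hg hh hfg hfh hgh hdvd
  have hαint : IsIntegral GaussianInt α :=
    ⟨_, Polynomial.monic_X_pow_sub_C (f * g ^ 2 * h ^ 3) four_ne_zero, by simp [hα]⟩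
  have hαB : (⟨α, hαint⟩ : B) ^ 4 = algebraMap GaussianInt B (π ^ v * u) := by
    ext
    simp [hα, hm]
  obtain ⟨⟨Q, hQ, hQπ⟩⟩ := Ideal.nonempty_primesOver (S := B) (Ideal.span {π})
  have hπB : algebraMap GaussianInt B π ≠ 0 :=
    (map_ne_zero_iff _ (FaithfulSMul.algebraMap_injective _ B)).mpr hπ.ne_zero
  exact ⟨Q, hQ, hQπ.over.symm, Ideal.one_lt_ramificationIdx'_of_pow_eq_pow_mul hQπ.over.symm
    hπB (by rwa [Ideal.mem_span_singleton]) (by omega) hαB⟩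

/-- If `π` is a prime element of `ℤ[i]` dividing `f`, `g` or `h`, then the prime ideal `(π)`
ramifies in `N/K`: some prime of `O_N` lying over `(π)` has ramification index `> 1`. -/
theorem quartic_kummer_ramified_of_dvd
    (f g h : GaussianInt) (hf : Squarefree f) (hg : Squarefree g) (hh : Squarefree h)
    (hfg : IsCoprime f g) (hfh : IsCoprime f h) (hgh : IsCoprime g h)
    (K N : Type*) [Field K] [Field N]
    [Algebra GaussianInt K] [IsFractionRing GaussianInt K]
    [Algebra K N] [Algebra GaussianInt N] [IsScalarTower GaussianInt K N]
    [FiniteDimensional K N] (hdim : Module.finrank K N = 4)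
    (α : N) (hα : α ^ 4 = algebraMap GaussianInt N (f * g ^ 2 * h ^ 3))
    (hgen : Algebra.adjoin K {α} = ⊤)
    (π : GaussianInt) (hπ : Prime π) (hdvd : π ∣ f ∨ π ∣ g ∨ π ∣ h) :
    ∃ Q : Ideal (integralClosure GaussianInt N),
      Q.IsPrime ∧
      Q.comap (algebraMap GaussianInt (integralClosure GaussianInt N)) =
        Ideal.span {π} ∧
      1 < Ideal.ramificationIdx'
        (Ideal.span {π}) Q :=
  quartic_kummer_ramified_of_dvd_general f g h hf hg hh hfg hfh hgh K N α hα π hπ hdvd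
end

section
/- Let {1, (a₀+α)/d₁, (b₀+b₁α+α²)/d₂, (c₀+c₁α+c₂α²+α³)/d₃} be a normalised integral basis of O_N over ℤ[i]. Then gh divides d₂ and gh² divides d₃ in ℤ[i]; moreover, for every prime π of ℤ[i] coprime to 1+i, ν_π(d₂) = ν_π(gh) and ν_π(d₃) = ν_π(gh²). -/
/-!
The lower bounds come from two integral elements: `α² / (gh)` and `α³ / (gh²)` have square
`fh` and fourth power `f³g²h` respectively, and in a normalised basis the `α^j`-coordinate of
`α^j` is `d_j`.

For the upper bounds at an odd prime `π`, suppose `π^k ∣ d_j`. Then `π^k` divides the numerator of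
the `j`-th basis element in `O_N`. The automorphism `σ : α ↦ iα` is defined over `ℤ[i]`, and the
twisted trace `∑ₛ i^{-js} σ^s` sends that numerator to `4α^j`, so `π^k ∣ α^j` in `O_N`. Taking
fourth powers and descending to the integrally closed ring `ℤ[i]` gives `π^{4k} ∣ (fg²h³)^j`,
and since `f, g, h` are squarefree and pairwise coprime this forces `π^k ∣ gh` when `j = 2`
and `π^k ∣ gh²` when `j = 3`.
-/

open Polynomial

section Kummer

variable {K L : Type*} [Field K] [Field L] [Algebra K L] [FiniteDimensional K L]
  {n : ℕ} {α : L} {c : K}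

theorem minpoly_eq_X_pow_sub_C_of_adjoin_eq_top (hdim : Module.finrank K L = n)
    (hgen : Algebra.adjoin K {α} = ⊤) (hα : α ^ n = algebraMap K L c) :
    minpoly K α = X ^ n - C c := by
  have hint : IsIntegral K α := .of_finite K α
  have hdeg : (minpoly K α).natDegree = n := by
    rw [← hdim, (PowerBasis.ofAdjoinEqTop hint hgen).finrank, PowerBasis.ofAdjoinEqTop_dim]
  have hn : n ≠ 0 := hdim ▸ Module.finrank_pos.ne'
  refine (eq_of_monic_of_dvd_of_natDegree_le (minpoly.monic hint) (monic_X_pow_sub_C c hn)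
    (minpoly.dvd K α (by simp [hα])) ?_).symm
  rw [hdeg, natDegree_X_pow_sub_C]

theorem exists_algHom_apply_eq_mul_of_pow_eq (hdim : Module.finrank K L = n)
    (hgen : Algebra.adjoin K {α} = ⊤) (hα : α ^ n = algebraMap K L c) {ζ : K}
    (hζ : ζ ^ n = 1) : ∃ σ : L →ₐ[K] L, σ α = algebraMap K L ζ * α := by
  let pb := PowerBasis.ofAdjoinEqTop (.of_finite K α) hgen
  have hroot : aeval (algebraMap K L ζ * α) (minpoly K pb.gen) = 0 := by
    rw [PowerBasis.ofAdjoinEqTop_gen, minpoly_eq_X_pow_sub_C_of_adjoin_eq_top hdim hgen hα]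
    rw [map_sub, map_pow, aeval_X, aeval_C, mul_pow, ← map_pow, hζ, map_one, one_mul, hα, sub_self]
  exact ⟨pb.lift _ hroot, pb.lift_gen _ hroot⟩

end Kummer

section IntegralClosure

variable {R L : Type*} [CommRing R] [Field L] [Algebra R L]

theorem algebraMap_injective_of_isFractionRing (K : Type*) [Field K] [Algebra R K]
    [IsFractionRing R K] [Algebra K L] [IsScalarTower R K L] :
    Function.Injective (algebraMap R L) := by
  rw [IsScalarTower.algebraMap_eq R K L]
  exact (algebraMap K L).injective.comp (IsFractionRing.injective R K)

theorem exists_algebraMap_mul_eq_of_pow_eq {x : integralClosure R L} {e c : R} {n : ℕ}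
    (hinj : Function.Injective (algebraMap R L)) (hn : n ≠ 0) (he : e ≠ 0)
    (hx : (x : L) ^ n = algebraMap R L (e ^ n * c)) :
    ∃ y : integralClosure R L, algebraMap R _ e * y = x := by
  have he' : algebraMap R L e ≠ 0 := (map_ne_zero_iff _ hinj).mpr he
  have hy : IsIntegral R ((x : L) / algebraMap R L e) := by
    refine .of_pow (Nat.pos_of_ne_zero hn) ?_
    rw [div_pow, hx, map_mul, map_pow, mul_div_cancel_left₀ _ (pow_ne_zero n he')]
    exact isIntegral_algebraMap
  exact ⟨⟨_, hy⟩, Subtype.ext (mul_div_cancel₀ _ he')⟩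

theorem dvd_of_algebraMap_dvd_algebraMap [IsDomain R] [IsIntegrallyClosed R] (K : Type*)
    [Field K] [Algebra R K] [IsFractionRing R K] [Algebra K L] [IsScalarTower R K L] {a b : R}
    (ha : a ≠ 0)
    (h : algebraMap R (integralClosure R L) a ∣ algebraMap R _ b) : a ∣ b := by
  obtain ⟨z, hz⟩ := h
  have ha' : algebraMap R K a ≠ 0 := (map_ne_zero_iff _ (IsFractionRing.injective R K)).mpr ha
  have hq : algebraMap K L (algebraMap R K b / algebraMap R K a) = z := by
    rw [map_div₀, div_eq_iff ((_root_.map_ne_zero _).mpr ha'), ← IsScalarTower.algebraMap_apply,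
      ← IsScalarTower.algebraMap_apply, mul_comm]
    exact congrArg Subtype.val hz
  obtain ⟨y, hy⟩ := IsIntegrallyClosed.isIntegral_iff.mp
    ((isIntegral_algebraMap_iff (algebraMap K L).injective).mp (hq ▸ z.2))
  refine ⟨y, IsFractionRing.injective R K ?_⟩
  rw [map_mul, hy, mul_div_cancel₀ _ ha']

theorem pow_dvd_pow_of_algebraMap_dvd_pow [IsDomain R] [IsIntegrallyClosed R] (K : Type*)
    [Field K] [Algebra R K] [IsFractionRing R K] [Algebra K L] [IsScalarTower R K L]
    {a : integralClosure R L} {e m : R} {j n : ℕ} (he : e ≠ 0)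
    (ha : a ^ n = algebraMap R _ m) (h : algebraMap R _ e ∣ a ^ j) : e ^ n ∣ m ^ j := by
  refine dvd_of_algebraMap_dvd_algebraMap (L := L) K (pow_ne_zero n he) ?_
  rw [map_pow, map_pow, ← ha, ← pow_mul, mul_comm n j, pow_mul]
  exact pow_dvd_pow_of_dvd h n

theorem exists_algHom_integralClosure_apply_eq_mul (K : Type*) [Field K] [Algebra R K]
    [Algebra K L] [IsScalarTower R K L] [FiniteDimensional K L] {n : ℕ}
    (hdim : Module.finrank K L = n) {a : integralClosure R L}
    (hgen : Algebra.adjoin K {(a : L)} = ⊤) {m ζ : R} (ha : (a : L) ^ n = algebraMap R L m)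
    (hζ : ζ ^ n = 1) :
    ∃ σ : integralClosure R L →ₐ[R] integralClosure R L, σ a = algebraMap R _ ζ * a := by
  obtain ⟨σ, hσ⟩ := exists_algHom_apply_eq_mul_of_pow_eq hdim hgen (c := algebraMap R K m)
    (ζ := algebraMap R K ζ) (by rw [ha, IsScalarTower.algebraMap_apply R K L])
    (by rw [← map_pow, hζ, map_one])
  refine ⟨(σ.restrictScalars R).mapIntegralClosure, Subtype.ext ?_⟩
  show σ a = algebraMap R L ζ * a
  rw [hσ, ← IsScalarTower.algebraMap_apply]

end IntegralClosure

section Twist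

variable {R A : Type*} [CommRing R] [CommRing A] [Algebra R A] {i : R} (σ : A →ₐ[R] A) {a : A}
  {e : R}

theorem algebraMap_dvd_map_of_dvd {x : A} (h : algebraMap R A e ∣ x) :
    algebraMap R A e ∣ σ x :=
  σ.commutes e ▸ map_dvd σ h

theorem dvd_sq_of_dvd_quadratic (hi : i ^ 2 = -1) (hσ : σ a = algebraMap R A i * a)
    (he : IsCoprime e 4) {c₀ c₁ : R}
    (h : algebraMap R A e ∣ algebraMap R A c₀ + algebraMap R A c₁ * a + a ^ 2) :
    algebraMap R A e ∣ a ^ 2 := by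
  set x := algebraMap R A c₀ + algebraMap R A c₁ * a + a ^ 2
  set ι := algebraMap R A i
  have hι : ι ^ 2 = -1 := by rw [← map_pow, hi, map_neg, map_one]
  have hσι : σ ι = ι := σ.commutes i
  have htrace : x - σ x + σ (σ x) - σ (σ (σ x)) = 4 * a ^ 2 := by
    simp only [x, map_add, map_mul, map_pow, AlgHom.commutes, hσ, hσι]
    linear_combination (algebraMap R A c₁ * a * (1 - ι) - a ^ 2 * (ι ^ 4 - 2 * ι ^ 2 + 3)) * hι
  have h4 : algebraMap R A e ∣ 4 * a ^ 2 := by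
    rw [← htrace]
    have hσx := algebraMap_dvd_map_of_dvd σ h
    have hσσx := algebraMap_dvd_map_of_dvd σ hσx
    exact ((h.sub hσx).add hσσx).sub (algebraMap_dvd_map_of_dvd σ hσσx)
  exact (he.map (algebraMap R A)).dvd_of_dvd_mul_left (by rwa [map_ofNat])

theorem dvd_cube_of_dvd_cubic (hi : i ^ 2 = -1) (hσ : σ a = algebraMap R A i * a)
    (he : IsCoprime e 4) {c₀ c₁ c₂ : R}
    (h : algebraMap R A e ∣
      algebraMap R A c₀ + algebraMap R A c₁ * a + algebraMap R A c₂ * a ^ 2 + a ^ 3) :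
    algebraMap R A e ∣ a ^ 3 := by
  set x := algebraMap R A c₀ + algebraMap R A c₁ * a + algebraMap R A c₂ * a ^ 2 + a ^ 3
  set ι := algebraMap R A i
  have hι : ι ^ 2 = -1 := by rw [← map_pow, hi, map_neg, map_one]
  have hσι : σ ι = ι := σ.commutes i
  have htrace : x + ι * σ x + ι ^ 2 * σ (σ x) + ι ^ 3 * σ (σ (σ x)) = 4 * a ^ 3 := by
    simp only [x, map_add, map_mul, map_pow, AlgHom.commutes, hσ, hσι]
    linear_combination (algebraMap R A c₀ * (1 + ι) + algebraMap R A c₁ * a * (1 + ι ^ 4)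
      + algebraMap R A c₂ * a ^ 2 * (1 + ι ^ 3) * (1 - ι ^ 2 + ι ^ 4)
      + a ^ 3 * (ι ^ 10 - ι ^ 8 + 2 * ι ^ 6 - 2 * ι ^ 4 + 3 * ι ^ 2 - 3)) * hι
  have h4 : algebraMap R A e ∣ 4 * a ^ 3 := by
    rw [← htrace]
    have hσx := algebraMap_dvd_map_of_dvd σ h
    have hσσx := algebraMap_dvd_map_of_dvd σ hσx
    exact ((h.add (hσx.mul_left _)).add (hσσx.mul_left _)).add
      ((algebraMap_dvd_map_of_dvd σ hσσx).mul_left _)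
  exact (he.map (algebraMap R A)).dvd_of_dvd_mul_left (by rwa [map_ofNat])

end Twist

section Valuation

variable {R : Type*} [CommRing R] {π f g h : R}

theorem exists_emultiplicity_eq_of_squarefree_of_isCoprime (hπ : Prime π) (hf : Squarefree f)
    (hg : Squarefree g) (hh : Squarefree h) (hfg : IsCoprime f g) (hfh : IsCoprime f h)
    (hgh : IsCoprime g h) :
    ∃ u v w : ℕ, emultiplicity π f = u ∧ emultiplicity π g = v ∧ emultiplicity π h = w ∧
      u + v + w ≤ 1 := by
  have le_one {x : R} (hx : Squarefree x) : ∃ n : ℕ, emultiplicity π x = n ∧ n ≤ 1 := by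
    have hle := ((squarefree_iff_emultiplicity_le_one x).mp hx π).resolve_right hπ.not_isUnit
    obtain ⟨n, hn⟩ := ENat.ne_top_iff_exists.mp (ne_top_of_le_ne_top ENat.one_ne_top hle)
    exact ⟨n, hn.symm, by exact_mod_cast hn ▸ hle⟩
  have disjoint {x y : R} (hxy : IsCoprime x y) :
      emultiplicity π x = 0 ∨ emultiplicity π y = 0 := by
    simp only [emultiplicity_eq_zero, ← not_and_or]
    exact fun hπxy => hπ.not_isUnit (hxy.isUnit_of_dvd' hπxy.1 hπxy.2)
  obtain ⟨u, hu, hu1⟩ := le_one hf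
  obtain ⟨v, hv, hv1⟩ := le_one hg
  obtain ⟨w, hw, hw1⟩ := le_one hh
  have huv := disjoint hfg
  have huw := disjoint hfh
  have hvw := disjoint hgh
  rw [hu, hv, hw] at *
  norm_cast at huv huw hvw
  exact ⟨u, v, w, rfl, rfl, rfl, by omega⟩

theorem pow_dvd_mul_of_pow_pow_four_dvd_sq [IsDomain R] (hπ : Prime π) (hf : Squarefree f)
    (hg : Squarefree g) (hh : Squarefree h) (hfg : IsCoprime f g) (hfh : IsCoprime f h)
    (hgh : IsCoprime g h) {k : ℕ} (hk : (π ^ k) ^ 4 ∣ (f * g ^ 2 * h ^ 3) ^ 2) :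
    π ^ k ∣ g * h := by
  obtain ⟨u, v, w, hu, hv, hw, huvw⟩ :=
    exists_emultiplicity_eq_of_squarefree_of_isCoprime hπ hf hg hh hfg hfh hgh
  rw [← pow_mul, pow_dvd_iff_le_emultiplicity] at hk
  rw [pow_dvd_iff_le_emultiplicity]
  simp only [emultiplicity_mul hπ, emultiplicity_pow hπ, hu, hv, hw] at hk ⊢
  norm_cast at hk ⊢
  omega

theorem pow_dvd_mul_sq_of_pow_pow_four_dvd_cube [IsDomain R] (hπ : Prime π) (hf : Squarefree f)
    (hg : Squarefree g) (hh : Squarefree h) (hfg : IsCoprime f g) (hfh : IsCoprime f h)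
    (hgh : IsCoprime g h) {k : ℕ} (hk : (π ^ k) ^ 4 ∣ (f * g ^ 2 * h ^ 3) ^ 3) :
    π ^ k ∣ g * h ^ 2 := by
  obtain ⟨u, v, w, hu, hv, hw, huvw⟩ :=
    exists_emultiplicity_eq_of_squarefree_of_isCoprime hπ hf hg hh hfg hfh hgh
  rw [← pow_mul, pow_dvd_iff_le_emultiplicity] at hk
  rw [pow_dvd_iff_le_emultiplicity]
  simp only [emultiplicity_mul hπ, emultiplicity_pow hπ, hu, hv, hw] at hk ⊢
  norm_cast at hk ⊢
  omega

end Valuation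

section NormalisedBasis

variable {R A : Type*} [CommRing R] [CommRing A] [Algebra R A] (b : Module.Basis (Fin 4) R A)
  {a : A} {a₀ b₀ b₁ c₀ c₁ c₂ d₁ d₂ d₃ : R}

theorem Module.Basis.dvd_repr_of_algebraMap_mul_eq {e : R} {x y : A}
    (h : algebraMap R A e * y = x) (j : Fin 4) : e ∣ b.repr x j :=
  ⟨b.repr y j, by rw [← h, ← Algebra.smul_def, map_smul, Finsupp.smul_apply, smul_eq_mul]⟩

theorem Module.Basis.repr_sq_two (hb0 : b 0 = 1)
    (hb1 : algebraMap R A d₁ * b 1 = algebraMap R A a₀ + a)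
    (hb2 : algebraMap R A d₂ * b 2 = algebraMap R A b₀ + algebraMap R A b₁ * a + a ^ 2) :
    b.repr (a ^ 2) 2 = d₂ := by
  have ha : a = d₁ • b 1 - a₀ • b 0 := by
    simp only [Algebra.smul_def, hb0, hb1]; ring
  have ha2 : a ^ 2 = d₂ • b 2 - b₁ • a - b₀ • b 0 := by
    simp only [Algebra.smul_def, hb0, hb2]; ring
  rw [ha2, ha]
  simp

theorem Module.Basis.repr_cube_three (hb0 : b 0 = 1)
    (hb1 : algebraMap R A d₁ * b 1 = algebraMap R A a₀ + a)
    (hb2 : algebraMap R A d₂ * b 2 = algebraMap R A b₀ + algebraMap R A b₁ * a + a ^ 2)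
    (hb3 : algebraMap R A d₃ * b 3 =
      algebraMap R A c₀ + algebraMap R A c₁ * a + algebraMap R A c₂ * a ^ 2 + a ^ 3) :
    b.repr (a ^ 3) 3 = d₃ := by
  have ha : a = d₁ • b 1 - a₀ • b 0 := by
    simp only [Algebra.smul_def, hb0, hb1]; ring
  have ha2 : a ^ 2 = d₂ • b 2 - b₁ • a - b₀ • b 0 := by
    simp only [Algebra.smul_def, hb0, hb2]; ring
  have ha3 : a ^ 3 = d₃ • b 3 - c₂ • a ^ 2 - c₁ • a - c₀ • b 0 := by
    simp only [Algebra.smul_def, hb0, hb3]; ring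
  rw [ha3, ha2, ha]
  simp

end NormalisedBasis

theorem GaussianInt.sqrtd_sq : (Zsqrtd.sqrtd : GaussianInt) ^ 2 = -1 := by
  rw [sq, Zsqrtd.dmuld]; rfl

theorem GaussianInt.isCoprime_four_of_isCoprime_one_add_sqrtd {π : GaussianInt}
    (hπ : IsCoprime π (1 + Zsqrtd.sqrtd)) : IsCoprime π 4 := by
  have h4 : (4 : GaussianInt) = -(1 + Zsqrtd.sqrtd) ^ 4 := by
    linear_combination ((Zsqrtd.sqrtd : GaussianInt) ^ 2 + 4 * Zsqrtd.sqrtd + 5) * sqrtd_sq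
  rw [h4]
  exact (hπ.pow_right).neg_right

/-- For a normalised integral basis of `O_N` over `ℤ[i]`: `gh ∣ d₂` and `gh² ∣ d₃`;
moreover for every prime `π` of `ℤ[i]` coprime to `1+i`,
`ν_π(d₂) = ν_π(gh)` and `ν_π(d₃) = ν_π(gh²)`. -/
theorem quartic_kummer_odd_parts_of_d2_d3
(f g h : GaussianInt) (hf : Squarefree f) (hg : Squarefree g) (hh : Squarefree h)
    (hfg : IsCoprime f g) (hfh : IsCoprime f h) (hgh : IsCoprime g h)
    (K N : Type*) [Field K] [Field N]
    [Algebra GaussianInt K] [IsFractionRing GaussianInt K]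
    [Algebra K N] [Algebra GaussianInt N] [IsScalarTower GaussianInt K N]
    [FiniteDimensional K N] (hdim : Module.finrank K N = 4)
    (α : N) (hα : α ^ 4 = algebraMap GaussianInt N (f * g ^ 2 * h ^ 3))
    (hgen : Algebra.adjoin K {α} = ⊤)
    (a₀ b₀ b₁ c₀ c₁ c₂ d₁ d₂ d₃ : GaussianInt)
    (bN : Module.Basis (Fin 4) GaussianInt (integralClosure GaussianInt N))
    (hb0 : (bN 0 : N) = 1)
    (hb1 : algebraMap GaussianInt N d₁ * (bN 1 : N) = algebraMap GaussianInt N a₀ + α)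
    (hb2 : algebraMap GaussianInt N d₂ * (bN 2 : N) =
      algebraMap GaussianInt N b₀ + algebraMap GaussianInt N b₁ * α + α ^ 2)
    (hb3 : algebraMap GaussianInt N d₃ * (bN 3 : N) =
      algebraMap GaussianInt N c₀ + algebraMap GaussianInt N c₁ * α +
        algebraMap GaussianInt N c₂ * α ^ 2 + α ^ 3) :
    g * h ∣ d₂ ∧ g * h ^ 2 ∣ d₃ ∧
    ∀ π : GaussianInt, Prime π → IsCoprime π (1 + Zsqrtd.sqrtd) →
      (∀ k : ℕ, π ^ k ∣ d₂ ↔ π ^ k ∣ g * h) ∧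
      (∀ k : ℕ, π ^ k ∣ d₃ ↔ π ^ k ∣ g * h ^ 2) := by
  let A := integralClosure GaussianInt N
  let a : A := ⟨α, ⟨X ^ 4 - C (f * g ^ 2 * h ^ 3), monic_X_pow_sub_C _ four_ne_zero, by simp [hα]⟩⟩
  have ha4 : a ^ 4 = algebraMap GaussianInt A (f * g ^ 2 * h ^ 3) := Subtype.ext hα
  have hb0' : bN 0 = 1 := Subtype.ext hb0
  have hb1' : algebraMap GaussianInt A d₁ * bN 1 = algebraMap GaussianInt A a₀ + a :=
    Subtype.ext hb1
  have hb2' : algebraMap GaussianInt A d₂ * bN 2 =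
      algebraMap GaussianInt A b₀ + algebraMap GaussianInt A b₁ * a + a ^ 2 := Subtype.ext hb2
  have hb3' : algebraMap GaussianInt A d₃ * bN 3 = algebraMap GaussianInt A c₀ +
      algebraMap GaussianInt A c₁ * a + algebraMap GaussianInt A c₂ * a ^ 2 + a ^ 3 :=
    Subtype.ext hb3
  have hinj := algebraMap_injective_of_isFractionRing (R := GaussianInt) (L := N) K
  have hd₂ : g * h ∣ d₂ := by
    obtain ⟨y, hy⟩ := exists_algebraMap_mul_eq_of_pow_eq (x := a ^ 2) (c := f * h) hinj
      two_ne_zero (mul_ne_zero hg.ne_zero hh.ne_zero)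
      (by change (α ^ 2) ^ 2 = _; rw [← pow_mul, hα]; congr 1; ring)
    exact bN.repr_sq_two hb0' hb1' hb2' ▸ bN.dvd_repr_of_algebraMap_mul_eq hy 2
  have hd₃ : g * h ^ 2 ∣ d₃ := by
    obtain ⟨y, hy⟩ := exists_algebraMap_mul_eq_of_pow_eq (x := a ^ 3) (c := f ^ 3 * g ^ 2 * h)
      hinj four_ne_zero (mul_ne_zero hg.ne_zero (pow_ne_zero 2 hh.ne_zero))
      (by change (α ^ 3) ^ 4 = _; rw [pow_right_comm, hα, ← map_pow]; congr 1; ring)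
    exact bN.repr_cube_three hb0' hb1' hb2' hb3' ▸ bN.dvd_repr_of_algebraMap_mul_eq hy 3
  obtain ⟨σ, hσ⟩ := exists_algHom_integralClosure_apply_eq_mul K hdim (a := a) hgen hα
    (ζ := Zsqrtd.sqrtd) (by rw [show 4 = 2 * 2 from rfl, pow_mul, GaussianInt.sqrtd_sq]; norm_num)
  refine ⟨hd₂, hd₃, fun π hπ hπ2 => ?_⟩
  have h4 (k : ℕ) : IsCoprime (π ^ k) 4 :=
    (GaussianInt.isCoprime_four_of_isCoprime_one_add_sqrtd hπ2).pow_left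
  have hπk (k : ℕ) : π ^ k ≠ 0 := pow_ne_zero k hπ.ne_zero
  refine ⟨fun k => ⟨fun hk => ?_, (·.trans hd₂)⟩, fun k => ⟨fun hk => ?_, (·.trans hd₃)⟩⟩
  · refine pow_dvd_mul_of_pow_pow_four_dvd_sq hπ hf hg hh hfg hfh hgh
      (pow_dvd_pow_of_algebraMap_dvd_pow K (hπk k) ha4 ?_)
    exact dvd_sq_of_dvd_quadratic σ GaussianInt.sqrtd_sq hσ (h4 k)
      (hb2' ▸ (map_dvd (algebraMap GaussianInt A) hk).mul_right _)
  · refine pow_dvd_mul_sq_of_pow_pow_four_dvd_cube hπ hf hg hh hfg hfh hgh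
      (pow_dvd_pow_of_algebraMap_dvd_pow K (hπk k) ha4 ?_)
    exact dvd_cube_of_dvd_cubic σ GaussianInt.sqrtd_sq hσ (h4 k)
      (hb3' ▸ (map_dvd (algebraMap GaussianInt A) hk).mul_right _)
end

section
/- Let {1, (a₀+α)/d₁, (b₀+b₁α+α²)/d₂, (c₀+c₁α+c₂α²+α³)/d₃} be a normalised integral basis of O_N over ℤ[i]. Then ν_{1+i}(d₁) ≤ 1, and ν_{1+i}(d₁) = 1 if and only if m ≡ 1 (mod 4ℤ[i]). -/
/-!
Put `π = 1 + i` and `β = (a₀ + α)/d₁`. Since `α` generates `N/K` and `α⁴ = m`, the minimal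
polynomial of `β` over `K` is `(X - a₀/d₁)⁴ - m/d₁⁴`. As `β` is integral and `ℤ[i]` is integrally
closed, its coefficients lie in `ℤ[i]`, so `d₁³ ∣ 4a₀³` and `d₁⁴ ∣ a₀⁴ - m`, while the shape of `m`
gives `π⁴ ∤ m`. Because `4 = -π⁴`, `π² ∣ d₁` would force `π ∣ a₀` and then `π⁴ ∣ m`; and `π ∣ d₁`
forces `π ∤ a₀`, hence `m ≡ a₀⁴ ≡ 1 (mod 4)`. Conversely, if `m ≡ 1 (mod 4)` then `(1 + α)/π` is
integral, and expanding it in the triangular basis shows that `π ∣ d₁`.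
-/

open Polynomial Module

theorem Prime.not_pow_dvd_pow_mul {R : Type*} [CommMonoidWithZero R] [IsCancelMulZero R]
    {p x u : R} (hp : Prime p) (hx : ¬p * p ∣ x) (hu : ¬p ∣ u) {n k : ℕ} (hnk : n < k) :
    ¬p ^ k ∣ x ^ n * u := by
  intro h
  have hdvd : p ^ (n + 1) ∣ x ^ n * u := (pow_dvd_pow p hnk).trans h
  by_cases hpx : p ∣ x
  · obtain ⟨y, rfl⟩ := hpx
    have hy : ¬p ∣ y := fun hy => hx (mul_dvd_mul_left p hy)
    rw [mul_pow, mul_assoc, pow_succ', mul_comm p] at hdvd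
    exact hp.not_dvd_mul (fun h => hy (hp.dvd_of_dvd_pow h)) hu
      ((mul_dvd_mul_iff_left (pow_ne_zero n hp.ne_zero)).1 hdvd)
  · exact hp.not_dvd_mul (fun h => hpx (hp.dvd_of_dvd_pow h)) hu
      ((dvd_pow_self p n.succ_ne_zero).trans hdvd)

theorem Prime.not_pow_four_dvd_mul_sq_mul_cube {R : Type*} [CommRing R] [IsDomain R]
    {p f g h : R} (hp : Prime p) (hf : Squarefree f) (hg : Squarefree g) (hh : Squarefree h)
    (hfg : IsCoprime f g) (hfh : IsCoprime f h) (hgh : IsCoprime g h) :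
    ¬p ^ 4 ∣ f * g ^ 2 * h ^ 3 := by
  have not_sq_dvd {x : R} (hx : Squarefree x) : ¬p * p ∣ x := fun h => hp.not_isUnit (hx p h)
  have not_dvd {x y : R} (hxy : IsCoprime x y) (hx : p ∣ x) : ¬p ∣ y := fun hy =>
    hp.not_isUnit (hxy.isUnit_of_dvd' hx hy)
  have not_dvd_pow {x : R} (hx : ¬p ∣ x) (n : ℕ) : ¬p ∣ x ^ n := fun h => hx (hp.dvd_of_dvd_pow h)
  by_cases hpg : p ∣ g
  · rw [show f * g ^ 2 * h ^ 3 = g ^ 2 * (f * h ^ 3) by ring]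
    exact hp.not_pow_dvd_pow_mul (not_sq_dvd hg) (hp.not_dvd_mul (not_dvd hfg.symm hpg)
      (not_dvd_pow (not_dvd hgh hpg) 3)) (by norm_num)
  by_cases hph : p ∣ h
  · rw [show f * g ^ 2 * h ^ 3 = h ^ 3 * (f * g ^ 2) by ring]
    exact hp.not_pow_dvd_pow_mul (not_sq_dvd hh) (hp.not_dvd_mul (not_dvd hfh.symm hph)
      (not_dvd_pow hpg 2)) (by norm_num)
  · rw [show f * g ^ 2 * h ^ 3 = f ^ 1 * (g ^ 2 * h ^ 3) by ring]
    exact hp.not_pow_dvd_pow_mul (not_sq_dvd hf)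
      (hp.not_dvd_mul (not_dvd_pow hpg 2) (not_dvd_pow hph 3)) (by norm_num)

namespace GaussianInt

local notation "π" => (1 + Zsqrtd.sqrtd : GaussianInt)

theorem one_add_sqrtd_pow_four : π ^ 4 = -4 := by decide

theorem prime_one_add_sqrtd_s16 : Prime π := by
  have hnorm : (Zsqrtd.norm π).natAbs = 2 := by decide
  rw [← UniqueFactorizationMonoid.irreducible_iff_prime]
  refine ⟨fun hu => by simp [← Zsqrtd.norm_eq_one_iff, hnorm] at hu, fun a b hab => ?_⟩
  have hab2 : (Zsqrtd.norm a).natAbs * (Zsqrtd.norm b).natAbs = 2 := by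
    rw [← Int.natAbs_mul, ← Zsqrtd.norm_mul, ← hab, hnorm]
  rcases Nat.prime_two.eq_one_or_self_of_dvd _ (Dvd.intro _ hab2) with ha | ha
  · exact Or.inl (Zsqrtd.norm_eq_one_iff.1 ha)
  · exact Or.inr (Zsqrtd.norm_eq_one_iff.1 (by rw [ha] at hab2; omega))

theorem one_add_sqrtd_dvd_iff (z : GaussianInt) : π ∣ z ↔ Even (z.re + z.im) := by
  constructor
  · rintro ⟨w, rfl⟩
    exact ⟨w.re, by simp [Zsqrtd.re_mul, Zsqrtd.im_mul]⟩
  · rintro ⟨k, hk⟩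
    exact ⟨⟨k, z.im - k⟩, by ext <;> simp [Zsqrtd.re_mul, Zsqrtd.im_mul]; omega⟩

theorem one_add_sqrtd_dvd_add_one {z : GaussianInt} (hz : ¬π ∣ z) : π ∣ z + 1 := by
  rw [one_add_sqrtd_dvd_iff] at hz ⊢
  simp only [Zsqrtd.re_add, Zsqrtd.im_add, Zsqrtd.re_one, Zsqrtd.im_one, add_zero] at hz ⊢
  rw [add_right_comm, Int.even_add_one]
  exact hz

-- `(π t - 1)⁴ - 1 = π⁴ (t⁴ + π³ t³ - 3i t² + π t)`, with `π⁴ = -4`.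
theorem one_add_sqrtd_mul_sub_one_pow_four {A : Type*} [CommRing A] [Algebra GaussianInt A]
    (t : A) : (algebraMap GaussianInt A π * t - 1) ^ 4 - 1 =
      -4 * (t ^ 4 + algebraMap GaussianInt A (π ^ 3) * t ^ 3 +
        algebraMap GaussianInt A (-3 * Zsqrtd.sqrtd) * t ^ 2 + algebraMap GaussianInt A π * t) := by
  have h4 := congrArg (algebraMap GaussianInt A) one_add_sqrtd_pow_four
  have h2 := congrArg (algebraMap GaussianInt A)
    (show 6 * π ^ 2 = -4 * (-3 * Zsqrtd.sqrtd) by decide)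
  simp only [map_pow, map_mul, map_neg, map_ofNat] at h4 h2 ⊢
  linear_combination t ^ 4 * h4 + t ^ 2 * h2

theorem four_dvd_pow_four_sub_one {z : GaussianInt} (hz : ¬π ∣ z) : 4 ∣ z ^ 4 - 1 := by
  obtain ⟨y, hy⟩ := one_add_sqrtd_dvd_add_one hz
  have := one_add_sqrtd_mul_sub_one_pow_four y
  simp only [Algebra.algebraMap_self, RingHom.id_apply] at this
  rw [eq_sub_of_add_eq hy, this, neg_mul, dvd_neg]
  exact dvd_mul_right _ _

theorem isIntegral_of_mul_eq_one_add {L : Type*} [CommRing L] [IsDomain L]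
    [Algebra GaussianInt L] {m : GaussianInt} (hm : 4 ∣ m - 1) {α γ : L}
    (hα : α ^ 4 = algebraMap GaussianInt L m) (hπ : algebraMap GaussianInt L π ≠ 0)
    (hγ : algebraMap GaussianInt L π * γ = 1 + α) : IsIntegral GaussianInt γ := by
  obtain ⟨k, hk⟩ := hm
  have h4 : (4 : L) ≠ 0 := by
    simpa [← map_ofNat (algebraMap GaussianInt L), ← neg_eq_iff_eq_neg.2 one_add_sqrtd_pow_four]
      using pow_ne_zero 4 hπ
  refine ⟨X ^ 4 + C (π ^ 3) * X ^ 3 + C (-3 * Zsqrtd.sqrtd) * X ^ 2 + C π * X + C k,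
    by monicity!, ?_⟩
  have hroot := one_add_sqrtd_mul_sub_one_pow_four γ
  have hlhs : (algebraMap GaussianInt L π * γ - 1) ^ 4 - 1 = 4 * algebraMap GaussianInt L k := by
    rw [hγ, add_sub_cancel_left, hα, ← map_one (algebraMap GaussianInt L), ← map_sub, hk,
      map_mul, map_ofNat]
  rw [← aeval_def]
  refine (mul_right_inj' h4).1 ?_
  simp only [map_add, map_mul, map_pow, aeval_X, aeval_C] at hroot hlhs ⊢
  linear_combination hroot - hlhs

theorem not_one_add_sqrtd_sq_dvd {a d m : GaussianInt} (hm : ¬π ^ 4 ∣ m) (h3 : d ^ 3 ∣ 4 * a ^ 3)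
    (h4 : d ^ 4 ∣ a ^ 4 - m) : ¬π ^ 2 ∣ d := by
  intro hd
  have ha : π ∣ a := by
    have h6 : π ^ 4 * π ^ 2 ∣ π ^ 4 * -a ^ 3 := by
      rw [← pow_add, show π ^ (4 + 2) = (π ^ 2) ^ 3 by ring, one_add_sqrtd_pow_four, neg_mul_neg]
      exact (pow_dvd_pow_of_dvd hd 3).trans h3
    exact prime_one_add_sqrtd_s16.dvd_of_dvd_pow
      (dvd_neg.1 ((dvd_pow_self π two_ne_zero).trans
        ((mul_dvd_mul_iff_left (pow_ne_zero 4 prime_one_add_sqrtd_s16.ne_zero)).1 h6)))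
  have hπ4 : π ^ 4 ∣ a ^ 4 - m :=
    ((pow_dvd_pow_of_dvd (dvd_pow_self π two_ne_zero) 4)).trans
      ((pow_dvd_pow_of_dvd hd 4).trans h4)
  exact hm (by simpa using dvd_sub (pow_dvd_pow_of_dvd ha 4) hπ4)

theorem four_dvd_sub_one_of_one_add_sqrtd_dvd {a d m : GaussianInt} (hm : ¬π ^ 4 ∣ m)
    (h4 : d ^ 4 ∣ a ^ 4 - m) (hd : π ∣ d) : 4 ∣ m - 1 := by
  have hπ4 : π ^ 4 ∣ a ^ 4 - m := (pow_dvd_pow_of_dvd hd 4).trans h4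
  have ha : ¬π ∣ a := fun ha => hm (by simpa using dvd_sub (pow_dvd_pow_of_dvd ha 4) hπ4)
  rw [one_add_sqrtd_pow_four, neg_dvd] at hπ4
  simpa using dvd_sub (four_dvd_pow_four_sub_one ha) hπ4

end GaussianInt

section KummerGenerator

variable {R K L : Type*} [CommRing R] [Field K] [Field L] [Algebra K L] [FiniteDimensional K L]

theorem natDegree_minpoly_of_adjoin_eq_top {x : L} (hx : Algebra.adjoin K {x} = ⊤) :
    (minpoly K x).natDegree = finrank K L :=
  (PowerBasis.ofAdjoinEqTop (IsIntegral.of_finite K x) hx).finrank.symm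

theorem linearIndependent_pow_of_adjoin_eq_top [Algebra R K] [Algebra R L] [IsScalarTower R K L]
    (hR : Function.Injective (algebraMap R K)) {α : L} (hgen : Algebra.adjoin K {α} = ⊤) {n : ℕ}
    (hn : finrank K L = n) : LinearIndependent R fun i : Fin n => α ^ (i : ℕ) := by
  have hK := linearIndependent_pow (K := K) α
  rw [natDegree_minpoly_of_adjoin_eq_top hgen, hn] at hK
  exact hK.restrict_scalars (by simpa only [Algebra.smul_def, mul_one] using hR)

theorem minpoly_eq_X_sub_C_pow_sub_C {α β : L} {a c d : K} {n : ℕ}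
    (hgen : Algebra.adjoin K {α} = ⊤) (hn : finrank K L = n) (hα : α ^ n = algebraMap K L c)
    (hd : d ≠ 0) (hβ : algebraMap K L d * β = algebraMap K L a + α) :
    minpoly K β = (X - C (a / d)) ^ n - C (c / d ^ n) := by
  have hαβ : α = algebraMap K L d * β - algebraMap K L a := by rw [hβ]; ring
  have hgenβ : Algebra.adjoin K {β} = ⊤ := by
    refine eq_top_iff.2 (hgen ▸ Algebra.adjoin_le ?_)
    rw [Set.singleton_subset_iff, SetLike.mem_coe, hαβ]
    exact sub_mem (mul_mem (Subalgebra.algebraMap_mem _ d) (Algebra.self_mem_adjoin_singleton K β))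
      (Subalgebra.algebraMap_mem _ a)
  have hn0 : 0 < n := hn ▸ finrank_pos
  have hq : ((X - C (a / d)) ^ n - C (c / d ^ n)).Monic :=
    ((monic_X_sub_C _).pow n).sub_of_left (degree_C_le.trans_lt (by
      rw [degree_pow, degree_X_sub_C, nsmul_one]; exact_mod_cast hn0))
  refine (eq_of_monic_of_dvd_of_natDegree_le (minpoly.monic (IsIntegral.of_finite K β)) hq
    (minpoly.dvd K β ?_) ?_).symm
  · have hdL : algebraMap K L d ≠ 0 := (_root_.map_ne_zero _).2 hd
    have hshift : β - algebraMap K L (a / d) = α / algebraMap K L d := by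
      rw [map_div₀, eq_div_iff hdL, sub_mul, div_mul_cancel₀ _ hdL, mul_comm, hβ,
        add_sub_cancel_left]
    simp only [map_sub, map_pow, aeval_X, aeval_C]
    rw [hshift, div_pow, hα, map_div₀, map_pow, sub_self]
  · rw [natDegree_minpoly_of_adjoin_eq_top hgenβ, hn]
    exact (natDegree_sub_le _ _).trans (by simp)

theorem pow_dvd_of_isIntegral_of_mul_eq_add [IsDomain R] [IsIntegrallyClosed R] [Algebra R K]
    [IsFractionRing R K] [Algebra R L] [IsScalarTower R K L] {α β : L} {a d m : R} {n : ℕ}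
    (hgen : Algebra.adjoin K {α} = ⊤) (hn : finrank K L = n) (hα : α ^ n = algebraMap R L m)
    (hd : d ≠ 0) (hβ : IsIntegral R β) (hdβ : algebraMap R L d * β = algebraMap R L a + α) :
    d ^ (n - 1) ∣ n * (-a) ^ (n - 1) ∧ d ^ n ∣ (-a) ^ n - m := by
  have hinj := IsFractionRing.injective R K
  have hdK : algebraMap R K d ≠ 0 := (map_ne_zero_iff _ hinj).2 hd
  have hq := minpoly_eq_X_sub_C_pow_sub_C (β := β) (a := algebraMap R K a)
    (c := algebraMap R K m) hgen hn (by rwa [← IsScalarTower.algebraMap_apply]) hdK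
    (by rwa [← IsScalarTower.algebraMap_apply, ← IsScalarTower.algebraMap_apply])
  rw [sub_eq_add_neg X, ← C_neg] at hq
  have hcoeff (k : ℕ) := by
    simpa only [coeff_map] using congrArg (coeff · k)
      ((minpoly.isIntegrallyClosed_eq_field_fractions' K hβ).symm.trans hq)
  refine ⟨⟨(minpoly R β).coeff 1, hinj ?_⟩, ⟨(minpoly R β).coeff 0, hinj ?_⟩⟩
  · have h1 := hcoeff 1
    simp only [coeff_sub, coeff_X_add_C_pow, coeff_C, one_ne_zero, if_false, sub_zero,
      Nat.choose_one_right, ← neg_div, div_pow] at h1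
    simp only [map_mul, map_pow, map_neg, map_natCast, h1]
    field_simp
  · have h0 := hcoeff 0
    simp only [coeff_sub, coeff_X_add_C_pow, coeff_C, if_true, Nat.choose_zero_right,
      Nat.sub_zero, Nat.cast_one, mul_one, ← neg_div, div_pow] at h0
    simp only [map_mul, map_pow, map_neg, map_sub, h0]
    field_simp

end KummerGenerator

theorem LinearIndependent.eq_zero_of_cubic_eq_zero {R L : Type*} [CommRing R] [CommRing L]
    [Algebra R L] {α : L}
    (hind : LinearIndependent R fun i : Fin 4 => α ^ (i : ℕ)) (u₀ u₁ u₂ u₃ : R)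
    (h : algebraMap R L u₀ + algebraMap R L u₁ * α + algebraMap R L u₂ * α ^ 2 +
      algebraMap R L u₃ * α ^ 3 = 0) :
    u₀ = 0 ∧ u₁ = 0 ∧ u₂ = 0 ∧ u₃ = 0 := by
  have hu := Fintype.linearIndependent_iff.1 hind ![u₀, u₁, u₂, u₃]
    (by simpa [Fin.sum_univ_four, Algebra.smul_def] using h)
  exact ⟨hu 0, hu 1, hu 2, hu 3⟩

theorem dvd_of_isIntegral_of_triangular_basis {R L : Type*} [CommRing R] [IsDomain R] [Field L]
    [Algebra R L] {α : L} (hind : LinearIndependent R fun i : Fin 4 => α ^ (i : ℕ))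
    {a₀ b₀ b₁ c₀ c₁ c₂ d₁ d₂ d₃ : R} (bN : Module.Basis (Fin 4) R (integralClosure R L))
    (hb0 : (bN 0 : L) = 1)
    (hb1 : algebraMap R L d₁ * (bN 1 : L) = algebraMap R L a₀ + α)
    (hb2 : algebraMap R L d₂ * (bN 2 : L) =
      algebraMap R L b₀ + algebraMap R L b₁ * α + α ^ 2)
    (hb3 : algebraMap R L d₃ * (bN 3 : L) =
      algebraMap R L c₀ + algebraMap R L c₁ * α + algebraMap R L c₂ * α ^ 2 + α ^ 3)
    {p u : R} {γ : L} (hγ : IsIntegral R γ) (hpγ : algebraMap R L p * γ = algebraMap R L u + α) :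
    p ∣ d₁ := by
  have relation := hind.eq_zero_of_cubic_eq_zero
  have hp : p ≠ 0 := fun h => one_ne_zero (relation u 1 0 0
    (by simpa [h, eq_comm] using hpγ)).2.1
  have hd₁ : d₁ ≠ 0 := fun h => one_ne_zero (relation a₀ 1 0 0
    (by simpa [h, eq_comm] using hb1)).2.1
  have hd₂ : d₂ ≠ 0 := fun h => one_ne_zero (relation b₀ b₁ 1 0
    (by simpa [h, eq_comm] using hb2)).2.2.1
  have hd₃ : d₃ ≠ 0 := fun h => one_ne_zero (relation c₀ c₁ c₂ 1
    (by simpa [h, eq_comm] using hb3)).2.2.2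
  -- Clearing the denominators of `γ = ∑ xᵢ • bN i` and comparing the coefficients of `α³`, `α²`
  -- and `α` gives `x₃ = 0`, `x₂ = 0` and `p x₁ = d₁`.
  set x := bN.repr ⟨γ, hγ⟩
  have hx : γ = algebraMap R L (x 0) + algebraMap R L (x 1) * bN 1 +
      algebraMap R L (x 2) * bN 2 + algebraMap R L (x 3) * bN 3 := by
    simpa [Fin.sum_univ_four, Algebra.smul_def, hb0] using
      (congrArg Subtype.val (bN.sum_repr ⟨γ, hγ⟩)).symm
  obtain ⟨-, h₁, h₂, h₃⟩ := relation
    (p * (x 0 * d₁ * d₂ * d₃ + x 1 * d₂ * d₃ * a₀ + x 2 * d₁ * d₃ * b₀ + x 3 * d₁ * d₂ * c₀) -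
      d₁ * d₂ * d₃ * u)
    (p * (x 1 * d₂ * d₃ + x 2 * d₁ * d₃ * b₁ + x 3 * d₁ * d₂ * c₁) - d₁ * d₂ * d₃)
    (p * (x 2 * d₁ * d₃ + x 3 * d₁ * d₂ * c₂)) (p * (x 3 * d₁ * d₂)) (by
      simp only [map_mul, map_add, map_sub]
      linear_combination
        (algebraMap R L d₁ * algebraMap R L d₂ * algebraMap R L d₃) * hpγ
          - (algebraMap R L p * algebraMap R L d₁ * algebraMap R L d₂ * algebraMap R L d₃) * hx
          - (algebraMap R L p * algebraMap R L (x 1) * algebraMap R L d₂ * algebraMap R L d₃) * hb1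
          - (algebraMap R L p * algebraMap R L (x 2) * algebraMap R L d₁ * algebraMap R L d₃) * hb2
          - (algebraMap R L p * algebraMap R L (x 3) * algebraMap R L d₁ * algebraMap R L d₂) * hb3)
  have hx₃ : x 3 = 0 := by simpa [hp, hd₁, hd₂] using h₃
  have hx₂ : x 2 = 0 := by simpa [hx₃, hp, hd₁, hd₃] using h₂
  refine ⟨x 1, mul_left_cancel₀ (mul_ne_zero hd₂ hd₃) ?_⟩
  rw [hx₃, hx₂] at h₁
  linear_combination -h₁

/-- For a normalised integral basis of `O_N` over `ℤ[i]`: `ν_{1+i}(d₁) ≤ 1`, and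
`ν_{1+i}(d₁) = 1` if and only if `m ≡ 1 (mod 4ℤ[i])`. -/
theorem quartic_kummer_even_part_of_d1
(f g h : GaussianInt) (hf : Squarefree f) (hg : Squarefree g) (hh : Squarefree h)
    (hfg : IsCoprime f g) (hfh : IsCoprime f h) (hgh : IsCoprime g h)
    (K N : Type*) [Field K] [Field N]
    [Algebra GaussianInt K] [IsFractionRing GaussianInt K]
    [Algebra K N] [Algebra GaussianInt N] [IsScalarTower GaussianInt K N]
    [FiniteDimensional K N] (hdim : Module.finrank K N = 4)
    (α : N) (hα : α ^ 4 = algebraMap GaussianInt N (f * g ^ 2 * h ^ 3))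
    (hgen : Algebra.adjoin K {α} = ⊤)
    (a₀ b₀ b₁ c₀ c₁ c₂ d₁ d₂ d₃ : GaussianInt)
    (bN : Module.Basis (Fin 4) GaussianInt (integralClosure GaussianInt N))
    (hb0 : (bN 0 : N) = 1)
    (hb1 : algebraMap GaussianInt N d₁ * (bN 1 : N) = algebraMap GaussianInt N a₀ + α)
    (hb2 : algebraMap GaussianInt N d₂ * (bN 2 : N) =
      algebraMap GaussianInt N b₀ + algebraMap GaussianInt N b₁ * α + α ^ 2)
    (hb3 : algebraMap GaussianInt N d₃ * (bN 3 : N) =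
      algebraMap GaussianInt N c₀ + algebraMap GaussianInt N c₁ * α +
        algebraMap GaussianInt N c₂ * α ^ 2 + α ^ 3) :
    ¬ (1 + Zsqrtd.sqrtd : GaussianInt) ^ 2 ∣ d₁ ∧
    ((1 + Zsqrtd.sqrtd : GaussianInt) ∣ d₁ ↔
      (4 : GaussianInt) ∣ (f * g ^ 2 * h ^ 3 - 1)) := by
  have hK := IsFractionRing.injective GaussianInt K
  have hind := linearIndependent_pow_of_adjoin_eq_top hK hgen hdim
  have hd₁ : d₁ ≠ 0 := fun h => one_ne_zero
    (hind.eq_zero_of_cubic_eq_zero a₀ 1 0 0 (by simpa [h, eq_comm] using hb1)).2.1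
  obtain ⟨h3, h4⟩ := pow_dvd_of_isIntegral_of_mul_eq_add hgen hdim hα hd₁ (bN 1).2 hb1
  simp only [Nat.cast_ofNat, show 4 - 1 = 3 from rfl] at h3
  have hπ := GaussianInt.prime_one_add_sqrtd_s16
  have hm := hπ.not_pow_four_dvd_mul_sq_mul_cube hf hg hh hfg hfh hgh
  refine ⟨GaussianInt.not_one_add_sqrtd_sq_dvd hm h3 h4,
    GaussianInt.four_dvd_sub_one_of_one_add_sqrtd_dvd hm h4, fun hm1 => ?_⟩
  have hπN : algebraMap GaussianInt N (1 + Zsqrtd.sqrtd) ≠ 0 := by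
    rw [IsScalarTower.algebraMap_apply GaussianInt K N]
    exact (_root_.map_ne_zero _).2 ((map_ne_zero_iff _ hK).2 hπ.ne_zero)
  have hγ := mul_div_cancel₀ (1 + α) hπN
  exact dvd_of_isIntegral_of_triangular_basis hind bN hb0 hb1 hb2 hb3
    (GaussianInt.isIntegral_of_mul_eq_one_add hm1 hα hπN hγ) (by rwa [map_one])
end
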